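/- arXiv:1812.10601 — 3 statements merged into one kernel-verified Lean document; each statement's English description precedes it below -/
import Mathlib

section
/- For all n ≥ 1, the Eulerian polynomial A_n(t) = Σ_{π ∈ S_n} t^{des(π)} evaluated at t = -1 equals (-1)^((n-1)/2) · E_n if n is odd, and 0 if n is even, where E_n is the n-th Euler number (coefficient of x^n/n! in sec(x) + tan(x)). -/
/-- The one-line word of a permutation, with boundary convention
`π₀ = π_{n+1} = ∞` (here `∞` is represented by `n + 2`, larger than all letters,
which take values in `1, …, n`). -/
def wrd (n : ℕ) (π : Equiv.Perm (Fin n)) (i : ℕ) : ℕ :=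
  if h : 1 ≤ i ∧ i ≤ n then ((π ⟨i - 1, by omega⟩ : Fin n) : ℕ) + 1 else n + 2

/-- The number of descents of `π`: indices `1 ≤ i ≤ n - 1` with `π_i > π_{i+1}`. -/
def des (n : ℕ) (π : Equiv.Perm (Fin n)) : ℕ :=
  ((Finset.Icc 1 (n - 1)).filter (fun i => wrd n π (i + 1) < wrd n π i)).card

/-- `π` is alternating: `π₁ < π₂ > π₃ < π₄ > ⋯`. -/
def IsAlternating (n : ℕ) (π : Equiv.Perm (Fin n)) : Prop :=
  ∀ i ∈ Finset.Icc 1 (n - 1),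
    (Odd i → wrd n π i < wrd n π (i + 1)) ∧ (Even i → wrd n π (i + 1) < wrd n π i)

instance (n : ℕ) : DecidablePred (IsAlternating n) := fun π => by
  unfold IsAlternating; infer_instance

/-- The `n`-th Euler number, as the number of alternating permutations of `[n]`. -/
def eulerNumber (n : ℕ) : ℕ :=
  (Finset.univ.filter (IsAlternating n)).card

/-! Valley hopping. In the word `∞ π₁ ⋯ πₙ ∞` every letter is a peak, a valley, a double
ascent or a double descent. A double descent `x` can hop rightwards across the run of smaller
letters that follows it, becoming a double ascent (and conversely); this removes or creates exactly
one descent and leaves the type of every other letter unchanged. Hopping the smallest letter that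
is neither a peak nor a valley is thus a sign-reversing involution on `(-1) ^ des`, and the sum
reduces to the permutations without double ascents and descents, whose words zigzag
`∞ > π₁ < π₂ > ⋯ < ∞`. These exist only for odd `n`, are exactly the alternating permutations,
and have `(n - 1) / 2` descents. -/

open Finset

section Word

variable {n : ℕ} (σ : Equiv.Perm (Fin n))

lemma wrd_of_mem {i : ℕ} (h1 : 1 ≤ i) (h2 : i ≤ n) :
    wrd n σ i = (σ ⟨i - 1, by omega⟩ : ℕ) + 1 :=
  dif_pos ⟨h1, h2⟩

lemma wrd_of_not_mem {i : ℕ} (h : ¬(1 ≤ i ∧ i ≤ n)) : wrd n σ i = n + 2 :=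
  dif_neg h

lemma wrd_mem_Icc {i : ℕ} (h1 : 1 ≤ i) (h2 : i ≤ n) : wrd n σ i ∈ Set.Icc 1 n := by
  rw [wrd_of_mem σ h1 h2]
  constructor <;> grind

lemma wrd_injOn : Set.InjOn (wrd n σ) (Set.Icc 1 n) := by
  rintro i ⟨hi1, hi2⟩ j ⟨hj1, hj2⟩ h
  rw [wrd_of_mem σ hi1 hi2, wrd_of_mem σ hj1 hj2, add_left_inj, Fin.val_inj,
    σ.apply_eq_iff_eq, Fin.mk.injEq] at h
  omega

lemma wrd_ne_of_ne {i j : ℕ} (h1 : 1 ≤ i) (h2 : i ≤ n) (hij : j ≠ i) :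
    wrd n σ j ≠ wrd n σ i := by
  by_cases hj : 1 ≤ j ∧ j ≤ n
  · exact fun h => hij (wrd_injOn σ hj ⟨h1, h2⟩ h)
  · have := (wrd_mem_Icc σ h1 h2).2
    rw [wrd_of_not_mem σ hj]
    omega

lemma wrd_mul_of_mem (τ : Equiv.Perm (Fin n)) {i : ℕ} (h1 : 1 ≤ i) (h2 : i ≤ n) :
    wrd n (σ * τ) i = wrd n σ ((τ ⟨i - 1, by omega⟩ : ℕ) + 1) := by
  have := (τ ⟨i - 1, by omega⟩).isLt
  rw [wrd_of_mem _ h1 h2, wrd_of_mem σ (by omega) (by omega)]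
  simp

/-- The position of the letter `v` in the word of `σ`; `0` if `v ∉ [1, n]`. -/
def pos (n : ℕ) (σ : Equiv.Perm (Fin n)) (v : ℕ) : ℕ :=
  if h : 1 ≤ v ∧ v ≤ n then (σ⁻¹ ⟨v - 1, by omega⟩ : ℕ) + 1 else 0

lemma pos_eq_of_wrd_eq {i v : ℕ} (h1 : 1 ≤ i) (h2 : i ≤ n) (h : wrd n σ i = v) :
    pos n σ v = i := by
  obtain ⟨hv1, hv2⟩ := wrd_mem_Icc σ h1 h2
  rw [h] at hv1 hv2
  rw [wrd_of_mem σ h1 h2] at h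
  have : σ⁻¹ ⟨v - 1, by omega⟩ = ⟨i - 1, by omega⟩ :=
    Equiv.Perm.inv_eq_iff_eq.mpr (Fin.ext (by simp only; omega))
  rw [pos, dif_pos ⟨hv1, hv2⟩, this, Fin.val_mk]
  omega

lemma pos_mem_Icc {v : ℕ} (h1 : 1 ≤ v) (h2 : v ≤ n) : pos n σ v ∈ Set.Icc 1 n := by
  rw [pos, dif_pos ⟨h1, h2⟩]
  constructor <;> grind

lemma wrd_pos {v : ℕ} (h1 : 1 ≤ v) (h2 : v ≤ n) : wrd n σ (pos n σ v) = v := by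
  obtain ⟨hp1, hp2⟩ := pos_mem_Icc σ h1 h2
  rw [wrd_of_mem σ hp1 hp2]
  simp only [pos, Equiv.Perm.coe_inv, dif_pos (And.intro h1 h2), add_tsub_cancel_right, Fin.eta,
    Equiv.apply_symm_apply]
  omega

end Word

lemma Fin.val_cycleIcc {n : ℕ} (i j k : Fin n) :
    (Fin.cycleIcc i j k : ℕ) =
      if k < i ∨ j < k then (k : ℕ) else if k = j then (i : ℕ) else (k : ℕ) + 1 := by
  have : NeZero n := k.neZero
  rcases lt_or_ge k i with hki | hik
  · simp [Fin.cycleIcc_of_lt hki, hki]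
  rcases lt_or_ge j k with hjk | hkj
  · simp [Fin.cycleIcc_of_gt hjk, hjk]
  rw [Fin.cycleIcc_of_le_of_le hik hkj]
  have hin : ¬(k < i ∨ j < k) := by omega
  split_ifs
  · rfl
  · exact Fin.val_add_one_of_lt' (by omega)

/-- `rotate n a b` cycles the positions `a → a + 1 → ⋯ → b → a` (1-indexed, as for `wrd`). -/
def rotate (n a b : ℕ) : Equiv.Perm (Fin n) :=
  if h : 1 ≤ a ∧ a ≤ b ∧ b ≤ n then Fin.cycleIcc ⟨a - 1, by omega⟩ ⟨b - 1, by omega⟩ else 1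

lemma wrd_mul_rotate {n : ℕ} (σ : Equiv.Perm (Fin n)) {a b : ℕ} (ha : 1 ≤ a) (hab : a ≤ b)
    (hb : b ≤ n) (i : ℕ) :
    wrd n (σ * rotate n a b) i =
      if i < a ∨ b < i then wrd n σ i else if i = b then wrd n σ a else wrd n σ (i + 1) := by
  by_cases hi : 1 ≤ i ∧ i ≤ n
  · rw [wrd_mul_of_mem σ _ hi.1 hi.2, rotate, dif_pos ⟨ha, hab, hb⟩, Fin.val_cycleIcc]
    simp only [Fin.lt_def, Fin.mk.injEq]
    split_ifs <;> congr 1 <;> omega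
  · rw [if_pos (by omega), wrd_of_not_mem _ hi, wrd_of_not_mem σ hi]

section Rotate

variable {n : ℕ} (σ : Equiv.Perm (Fin n)) {a b : ℕ}

lemma wrd_mul_rotate_of_lt (ha : 1 ≤ a) (hab : a ≤ b) (hb : b ≤ n) {i : ℕ} (hi : i < a) :
    wrd n (σ * rotate n a b) i = wrd n σ i := by
  rw [wrd_mul_rotate σ ha hab hb, if_pos (Or.inl hi)]

lemma wrd_mul_rotate_of_gt (ha : 1 ≤ a) (hab : a ≤ b) (hb : b ≤ n) {i : ℕ} (hi : b < i) :
    wrd n (σ * rotate n a b) i = wrd n σ i := by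
  rw [wrd_mul_rotate σ ha hab hb, if_pos (Or.inr hi)]

lemma wrd_mul_rotate_of_mem (ha : 1 ≤ a) (hab : a ≤ b) (hb : b ≤ n) {i : ℕ} (h1 : a ≤ i)
    (h2 : i < b) : wrd n (σ * rotate n a b) i = wrd n σ (i + 1) := by
  rw [wrd_mul_rotate σ ha hab hb, if_neg (by omega), if_neg (by omega)]

lemma wrd_mul_rotate_right (ha : 1 ≤ a) (hab : a ≤ b) (hb : b ≤ n) :
    wrd n (σ * rotate n a b) b = wrd n σ a := by
  rw [wrd_mul_rotate σ ha hab hb, if_neg (by omega), if_pos rfl]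

end Rotate

lemma sum_Ico_add_eq_sum_Ico_add_of_shift {M : Type*} [AddCommMonoid M] {f g : ℕ → M}
    {m a b N : ℕ} (hma : m ≤ a) (hab : a ≤ b) (hbN : b < N) (hlow : ∀ i < a, g i = f i)
    (hmid : ∀ i, a ≤ i → i < b → g i = f (i + 1)) (hhigh : ∀ i, b < i → g i = f i) :
    ∑ i ∈ Ico m N, f i + g b = ∑ i ∈ Ico m N, g i + f a := by
  rw [← sum_Ico_consecutive f hma (show a ≤ N by omega), sum_eq_sum_Ico_succ_bot (show a < N by omega),
    ← sum_Ico_consecutive f (show a + 1 ≤ b + 1 by omega) (show b + 1 ≤ N by omega),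
    ← sum_Ico_consecutive g (show m ≤ b + 1 by omega) (show b + 1 ≤ N by omega),
    ← sum_Ico_consecutive g hma (show a ≤ b + 1 by omega), sum_Ico_succ_top hab,
    ← sum_Ico_add' f a b 1, sum_congr rfl fun i hi => hlow i (mem_Ico.1 hi).2,
    sum_congr rfl fun i hi => hmid i (mem_Ico.1 hi).1 (mem_Ico.1 hi).2,
    sum_congr rfl fun i hi => hhigh i (by simp only [mem_Ico] at hi; omega)]
  abel

lemma des_eq_sum {n : ℕ} (σ : Equiv.Perm (Fin n)) :
    des n σ = ∑ i ∈ Ico 1 (n + 1), if wrd n σ (i + 1) < wrd n σ i then 1 else 0 := by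
  rw [des, card_filter]
  refine sum_subset (fun i => by simp only [mem_Icc, mem_Ico]; omega) fun i hi hi' => ?_
  simp only [mem_Icc, mem_Ico] at hi hi'
  have := (wrd_mem_Icc σ hi.1 (by omega : i ≤ n)).2
  rw [wrd_of_not_mem σ (by omega), if_neg (by omega)]

/-- Both neighbours of `v` in `∞ π₁ ⋯ πₙ ∞` lie on the same side of `v`. -/
def IsPeakOrValley (n : ℕ) (σ : Equiv.Perm (Fin n)) (v : ℕ) : Prop :=
  v < wrd n σ (pos n σ v - 1) ↔ v < wrd n σ (pos n σ v + 1)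

instance (n : ℕ) (σ : Equiv.Perm (Fin n)) : DecidablePred (IsPeakOrValley n σ) := fun v => by
  unfold IsPeakOrValley; infer_instance

/-- The double ascents and double descents of `σ`. -/
def hoppable (n : ℕ) (σ : Equiv.Perm (Fin n)) : Finset ℕ :=
  {v ∈ Icc 1 n | ¬ IsPeakOrValley n σ v}

lemma mem_hoppable {n : ℕ} {σ : Equiv.Perm (Fin n)} {v : ℕ} :
    v ∈ hoppable n σ ↔ (1 ≤ v ∧ v ≤ n) ∧ ¬ IsPeakOrValley n σ v := by
  rw [hoppable, mem_filter, mem_Icc]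

structure CanHopRight (n : ℕ) (σ : Equiv.Perm (Fin n)) (a b : ℕ) : Prop where
  one_le : 1 ≤ a
  lt : a < b
  le_n : b ≤ n
  wrd_lt : ∀ i, a < i → i ≤ b → wrd n σ i < wrd n σ a
  lt_wrd_pred : wrd n σ a < wrd n σ (a - 1)
  lt_wrd_succ : wrd n σ a < wrd n σ (b + 1)

structure CanHopLeft (n : ℕ) (σ : Equiv.Perm (Fin n)) (a b : ℕ) : Prop where
  one_le : 1 ≤ a
  lt : a < b
  le_n : b ≤ n
  wrd_lt : ∀ i, a ≤ i → i < b → wrd n σ i < wrd n σ b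
  lt_wrd_pred : wrd n σ b < wrd n σ (a - 1)
  lt_wrd_succ : wrd n σ b < wrd n σ (b + 1)

section CanHop

variable {n : ℕ} {σ : Equiv.Perm (Fin n)} {a b : ℕ}

lemma canHopLeft_mul_rotate_iff :
    CanHopLeft n (σ * rotate n a b) a b ↔ CanHopRight n σ a b := by
  constructor
  · rintro ⟨ha, hab, hb, hlt, hl, hr⟩
    rw [wrd_mul_rotate_right σ ha hab.le hb] at hlt hl hr
    rw [wrd_mul_rotate_of_lt σ ha hab.le hb (by omega)] at hl
    rw [wrd_mul_rotate_of_gt σ ha hab.le hb (by omega)] at hr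
    refine ⟨ha, hab, hb, fun i h1 h2 => ?_, hl, hr⟩
    have := hlt (i - 1) (by omega) (by omega)
    rwa [wrd_mul_rotate_of_mem σ ha hab.le hb (by omega) (by omega), Nat.sub_add_cancel (by omega)]
      at this
  · rintro ⟨ha, hab, hb, hlt, hl, hr⟩
    refine ⟨ha, hab, hb, fun i h1 h2 => ?_, ?_, ?_⟩ <;>
      rw [wrd_mul_rotate_right σ ha hab.le hb]
    · rw [wrd_mul_rotate_of_mem σ ha hab.le hb h1 h2]
      exact hlt (i + 1) (by omega) (by omega)
    · rwa [wrd_mul_rotate_of_lt σ ha hab.le hb (by omega)]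
    · rwa [wrd_mul_rotate_of_gt σ ha hab.le hb (by omega)]

lemma CanHopRight.mem_hoppable (h : CanHopRight n σ a b) : wrd n σ a ∈ hoppable n σ := by
  obtain ⟨ha, hab, hb, hlt, hl, -⟩ := h
  obtain ⟨hx1, hxn⟩ := wrd_mem_Icc σ ha (by omega)
  rw [_root_.mem_hoppable, IsPeakOrValley, pos_eq_of_wrd_eq σ ha (by omega) rfl]
  have := hlt (a + 1) (by omega) (by omega)
  exact ⟨⟨hx1, hxn⟩, fun h => by omega⟩

lemma CanHopLeft.mem_hoppable (h : CanHopLeft n σ a b) : wrd n σ b ∈ hoppable n σ := by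
  obtain ⟨ha, hab, hb, hlt, -, hr⟩ := h
  obtain ⟨hx1, hxn⟩ := wrd_mem_Icc σ (by omega) hb
  rw [_root_.mem_hoppable, IsPeakOrValley, pos_eq_of_wrd_eq σ (by omega) hb rfl]
  have := hlt (b - 1) (by omega) (by omega)
  exact ⟨⟨hx1, hxn⟩, fun h => by omega⟩

lemma CanHopRight.des_eq_des_mul_rotate_add_one (h : CanHopRight n σ a b) :
    des n σ = des n (σ * rotate n a b) + 1 := by
  obtain ⟨ha, hab, hb, hlt, hl, hr⟩ := h
  set τ := σ * rotate n a b
  have lo : ∀ {i}, i < a → wrd n τ i = wrd n σ i := wrd_mul_rotate_of_lt σ ha hab.le hb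
  have mid : ∀ {i}, a ≤ i → i < b → wrd n τ i = wrd n σ (i + 1) :=
    wrd_mul_rotate_of_mem σ ha hab.le hb
  have hi : ∀ {i}, b < i → wrd n τ i = wrd n σ i := wrd_mul_rotate_of_gt σ ha hab.le hb
  have top : wrd n τ b = wrd n σ a := wrd_mul_rotate_right σ ha hab.le hb
  set f : ℕ → ℕ := fun i => if wrd n σ (i + 1) < wrd n σ i then 1 else 0
  set g : ℕ → ℕ := fun i => if wrd n τ (i + 1) < wrd n τ i then 1 else 0
  have hfa : f a = 1 := if_pos (hlt (a + 1) (by omega) (by omega))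
  have hgb : g b = 0 := by
    simp only [g, top, hi (lt_add_one b)]
    exact if_neg (by omega)
  have hlow : ∀ i < a, g i = f i := by
    intro i hia
    simp only [g, f, lo hia]
    rcases (show i + 1 < a ∨ i + 1 = a by omega) with h | h
    · rw [lo h]
    · have := hlt (a + 1) (by omega) (by omega)
      rw [h, mid le_rfl hab, show i = a - 1 by omega, if_pos (by omega), if_pos hl]
  have hmid : ∀ i, a ≤ i → i < b → g i = f (i + 1) := by
    intro i h1 h2
    simp only [g, f, mid h1 h2]
    rcases (show i + 1 < b ∨ i + 1 = b by omega) with h | h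
    · rw [mid (by omega) h]
    · have := hlt b (by omega) le_rfl
      rw [h, top, if_neg (by omega), if_neg (by omega)]
  have hhigh : ∀ i, b < i → g i = f i := by
    intro i hbi
    simp only [g, f, hi hbi, hi (show b < i + 1 by omega)]
  have key := sum_Ico_add_eq_sum_Ico_add_of_shift (m := 1) ha hab.le (show b < n + 1 by omega)
    hlow hmid hhigh
  rw [hfa, hgb, add_zero] at key
  rw [des_eq_sum σ, des_eq_sum τ]
  exact key

lemma CanHopRight.lt_wrd_pos_pred_iff (h : CanHopRight n σ a b) {v : ℕ} (h1 : 1 ≤ v) (h2 : v ≤ n)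
    (hv : v ≠ wrd n σ a) :
    v < wrd n (σ * rotate n a b) (pos n (σ * rotate n a b) v - 1) ↔
      v < wrd n σ (pos n σ v - 1) := by
  obtain ⟨ha, hab, hb, hlt, hl, hr⟩ := h
  obtain ⟨hr1, hrn⟩ := pos_mem_Icc σ h1 h2
  have hwr := wrd_pos σ h1 h2
  set r := pos n σ v
  have hra : r ≠ a := by rintro rfl; exact hv hwr.symm
  rcases lt_or_gt_of_ne hra with hra | hra
  · rw [pos_eq_of_wrd_eq _ hr1 hrn (by rw [wrd_mul_rotate_of_lt σ ha hab.le hb hra, hwr]),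
      wrd_mul_rotate_of_lt σ ha hab.le hb (by omega)]
  rcases le_or_gt r b with hrb | hrb
  · have hvx : v < wrd n σ a := hwr ▸ hlt r hra hrb
    rw [pos_eq_of_wrd_eq _ (i := r - 1) (by omega) (by omega)
      (by rw [wrd_mul_rotate_of_mem σ ha hab.le hb (by omega) (by omega),
        Nat.sub_add_cancel (by omega), hwr])]
    rcases (show r = a + 1 ∨ a + 1 < r by omega) with hr' | hr'
    · rw [wrd_mul_rotate_of_lt σ ha hab.le hb (by omega), hr', Nat.add_sub_cancel]
      exact iff_of_true (by omega) hvx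
    · rw [wrd_mul_rotate_of_mem σ ha hab.le hb (by omega) (by omega), Nat.sub_add_cancel (by omega)]
  · rw [pos_eq_of_wrd_eq _ hr1 hrn (by rw [wrd_mul_rotate_of_gt σ ha hab.le hb hrb, hwr])]
    rcases (show r = b + 1 ∨ b + 1 < r by omega) with hr' | hr'
    · have := hlt b hab le_rfl
      rw [hr', Nat.add_sub_cancel, wrd_mul_rotate_right σ ha hab.le hb]
      rw [hr'] at hwr
      exact iff_of_false (by omega) (by omega)
    · rw [wrd_mul_rotate_of_gt σ ha hab.le hb (by omega)]

lemma CanHopRight.lt_wrd_pos_succ_iff (h : CanHopRight n σ a b) {v : ℕ} (h1 : 1 ≤ v) (h2 : v ≤ n)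
    (hv : v ≠ wrd n σ a) :
    v < wrd n (σ * rotate n a b) (pos n (σ * rotate n a b) v + 1) ↔
      v < wrd n σ (pos n σ v + 1) := by
  obtain ⟨ha, hab, hb, hlt, hl, hr⟩ := h
  obtain ⟨hr1, hrn⟩ := pos_mem_Icc σ h1 h2
  have hwr := wrd_pos σ h1 h2
  set r := pos n σ v
  have hra : r ≠ a := by rintro rfl; exact hv hwr.symm
  rcases lt_or_gt_of_ne hra with hra | hra
  · rw [pos_eq_of_wrd_eq _ hr1 hrn (by rw [wrd_mul_rotate_of_lt σ ha hab.le hb hra, hwr])]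
    rcases (show r + 1 = a ∨ r + 1 < a by omega) with hr' | hr'
    · have := hlt (a + 1) (by omega) (by omega)
      rw [hr', wrd_mul_rotate_of_mem σ ha hab.le hb le_rfl hab]
      rw [show r = a - 1 by omega] at hwr
      exact iff_of_false (by omega) (by omega)
    · rw [wrd_mul_rotate_of_lt σ ha hab.le hb hr']
  rcases le_or_gt r b with hrb | hrb
  · have hvx : v < wrd n σ a := hwr ▸ hlt r hra hrb
    rw [pos_eq_of_wrd_eq _ (i := r - 1) (by omega) (by omega)
      (by rw [wrd_mul_rotate_of_mem σ ha hab.le hb (by omega) (by omega),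
        Nat.sub_add_cancel (by omega), hwr]), Nat.sub_add_cancel (by omega)]
    rcases (show r = b ∨ r < b by omega) with hr' | hr'
    · rw [hr', wrd_mul_rotate_right σ ha hab.le hb]
      exact iff_of_true hvx (by omega)
    · rw [wrd_mul_rotate_of_mem σ ha hab.le hb (by omega) hr']
  · rw [pos_eq_of_wrd_eq _ hr1 hrn (by rw [wrd_mul_rotate_of_gt σ ha hab.le hb hrb, hwr]),
      wrd_mul_rotate_of_gt σ ha hab.le hb (by omega)]

lemma CanHopRight.hoppable_mul_rotate (h : CanHopRight n σ a b) :
    hoppable n (σ * rotate n a b) = hoppable n σ := by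
  ext v
  by_cases hv : v = wrd n σ a
  · have hτ := (canHopLeft_mul_rotate_iff.2 h).mem_hoppable
    rw [wrd_mul_rotate_right σ h.one_le h.lt.le h.le_n, ← hv] at hτ
    exact iff_of_true hτ (hv ▸ h.mem_hoppable)
  simp only [_root_.mem_hoppable, IsPeakOrValley]
  refine and_congr_right fun hm => ?_
  rw [h.lt_wrd_pos_pred_iff hm.1 hm.2 hv, h.lt_wrd_pos_succ_iff hm.1 hm.2 hv]

end CanHop

/-- The first position after `q` holding a letter larger than `x`, or `n + 1` (where `∞` sits). -/
def nextGreater (n : ℕ) (σ : Equiv.Perm (Fin n)) (q x : ℕ) : ℕ :=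
  Nat.find (⟨q + n + 1, by omega, Or.inr (by omega)⟩ : ∃ j, q < j ∧ (x < wrd n σ j ∨ n < j))

/-- The last position before `q` holding a letter larger than `x`, or `0` (where `∞` sits). -/
def prevGreater (n : ℕ) (σ : Equiv.Perm (Fin n)) (q x : ℕ) : ℕ :=
  Nat.findGreatest (fun j => x < wrd n σ j) (q - 1)

/-- The modified Foata–Strehl action `φₓ`: a double descent (resp. double ascent) `x` moves
rightwards (resp. leftwards) across the adjacent run of smaller letters. Only meaningful for
`x ∈ hoppable n σ`. -/
def hop (n : ℕ) (σ : Equiv.Perm (Fin n)) (x : ℕ) : Equiv.Perm (Fin n) :=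
  if wrd n σ (pos n σ x + 1) < x then
    σ * rotate n (pos n σ x) (nextGreater n σ (pos n σ x) x - 1)
  else σ * (rotate n (prevGreater n σ (pos n σ x) x + 1) (pos n σ x))⁻¹

section Hop

variable {n : ℕ} {σ : Equiv.Perm (Fin n)} {a b x : ℕ}

lemma CanHopRight.hop_eq (h : CanHopRight n σ a b) : hop n σ (wrd n σ a) = σ * rotate n a b := by
  obtain ⟨ha, hab, hb, hlt, -, hr⟩ := h
  have hnext : nextGreater n σ a (wrd n σ a) = b + 1 := by
    rw [nextGreater, Nat.find_eq_iff]
    refine ⟨⟨by omega, Or.inl hr⟩, fun j hj ⟨hj1, hj2⟩ => ?_⟩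
    have := hlt j hj1 (by omega)
    omega
  rw [hop, pos_eq_of_wrd_eq σ ha (by omega) rfl, if_pos (hlt (a + 1) (by omega) (by omega)), hnext,
    Nat.add_sub_cancel]

lemma CanHopLeft.hop_eq (h : CanHopLeft n σ a b) :
    hop n σ (wrd n σ b) = σ * (rotate n a b)⁻¹ := by
  obtain ⟨ha, hab, hb, hlt, hl, hr⟩ := h
  have hprev : prevGreater n σ b (wrd n σ b) = a - 1 := by
    rw [prevGreater, Nat.findGreatest_eq_iff]
    refine ⟨by omega, fun _ => hl, fun j hj1 hj2 => ?_⟩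
    have := hlt j (by omega) (by omega)
    omega
  rw [hop, pos_eq_of_wrd_eq σ (by omega) hb rfl, if_neg (by omega), hprev, Nat.sub_add_cancel ha]

lemma CanHopRight.hop_mul_rotate (h : CanHopRight n σ a b) :
    hop n (σ * rotate n a b) (wrd n σ a) = σ := by
  rw [← wrd_mul_rotate_right σ h.one_le h.lt.le h.le_n, (canHopLeft_mul_rotate_iff.2 h).hop_eq,
    mul_inv_cancel_right]

lemma nextGreater_spec (q x : ℕ) :
    q < nextGreater n σ q x ∧ (x < wrd n σ (nextGreater n σ q x) ∨ n < nextGreater n σ q x) := by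
  rw [nextGreater]
  exact Nat.find_spec (p := fun j => q < j ∧ (x < wrd n σ j ∨ n < j)) _

lemma wrd_le_of_lt_nextGreater {q j : ℕ} (hqj : q < j) (hj : j < nextGreater n σ q x) :
    wrd n σ j ≤ x ∧ j ≤ n := by
  rw [nextGreater] at hj
  have := Nat.find_min _ hj
  push Not at this
  exact this hqj

lemma lt_wrd_prevGreater (q : ℕ) (hx : x ≤ n) : x < wrd n σ (prevGreater n σ q x) := by
  rcases Nat.eq_zero_or_pos (prevGreater n σ q x) with h | h
  · rw [h, wrd_of_not_mem σ (by omega)]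
    omega
  · exact Nat.findGreatest_of_ne_zero (P := fun j => x < wrd n σ j) rfl h.ne'

lemma wrd_le_of_prevGreater_lt {q j : ℕ} (hj : prevGreater n σ q x < j) (hjq : j < q) :
    wrd n σ j ≤ x :=
  not_lt.1 (Nat.findGreatest_is_greatest (P := fun j => x < wrd n σ j) hj (by omega))

lemma canHopRight_nextGreater {q : ℕ} (hq1 : 1 ≤ q) (hqn : q ≤ n)
    (hpv : ¬ (wrd n σ q < wrd n σ (q - 1) ↔ wrd n σ q < wrd n σ (q + 1)))
    (hdesc : wrd n σ (q + 1) < wrd n σ q) :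
    CanHopRight n σ q (nextGreater n σ q (wrd n σ q) - 1) := by
  have hle : ∀ j, q < j → j < nextGreater n σ q (wrd n σ q) → wrd n σ j ≤ wrd n σ q ∧ j ≤ n :=
    fun j => wrd_le_of_lt_nextGreater
  obtain ⟨hqR, hR⟩ := nextGreater_spec (σ := σ) q (wrd n σ q)
  generalize nextGreater n σ q (wrd n σ q) = R at hle hqR hR ⊢
  have hsmall : ∀ j, q < j → j < R → wrd n σ j < wrd n σ q := fun j hj1 hj2 =>
    lt_of_le_of_ne (hle j hj1 hj2).1 (wrd_ne_of_ne σ hq1 hqn (by omega))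
  have hRx : wrd n σ q < wrd n σ R := by
    refine hR.elim id fun hnR => ?_
    rw [wrd_of_not_mem σ (i := R) (by omega)]
    have := (wrd_mem_Icc σ hq1 hqn).2
    omega
  have hRq : q + 1 < R := by
    by_contra! hc
    rw [show R = q + 1 by omega] at hRx
    omega
  have hRn : R - 1 ≤ n := (hle (R - 1) (by omega) (by omega)).2
  refine ⟨hq1, by omega, hRn, fun i h1 h2 => hsmall i h1 (by omega), ?_, ?_⟩
  · by_contra hc
    exact hpv (iff_of_false hc (by omega))
  · rwa [Nat.sub_add_cancel (by omega)]

lemma canHopLeft_prevGreater {q : ℕ} (hq1 : 1 ≤ q) (hqn : q ≤ n)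
    (hpv : ¬ (wrd n σ q < wrd n σ (q - 1) ↔ wrd n σ q < wrd n σ (q + 1)))
    (hasc : ¬ wrd n σ (q + 1) < wrd n σ q) :
    CanHopLeft n σ (prevGreater n σ q (wrd n σ q) + 1) q := by
  have hle : ∀ j, prevGreater n σ q (wrd n σ q) < j → j < q → wrd n σ j ≤ wrd n σ q :=
    fun j => wrd_le_of_prevGreater_lt
  have hLq : prevGreater n σ q (wrd n σ q) ≤ q - 1 := Nat.findGreatest_le _
  have hLx := lt_wrd_prevGreater (σ := σ) q (wrd_mem_Icc σ hq1 hqn).2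
  generalize prevGreater n σ q (wrd n σ q) = L at hle hLq hLx ⊢
  have hright : wrd n σ q < wrd n σ (q + 1) :=
    lt_of_le_of_ne (not_lt.1 hasc) (wrd_ne_of_ne σ hq1 hqn (by omega)).symm
  have hleft : wrd n σ (q - 1) < wrd n σ q := by
    by_contra hc
    exact hpv (iff_of_true (lt_of_le_of_ne (not_lt.1 hc)
      (wrd_ne_of_ne σ hq1 hqn (by omega)).symm) hright)
  have hLq' : L + 1 < q := by
    by_contra! hc
    rw [show L = q - 1 by omega] at hLx
    omega
  refine ⟨by omega, hLq', hqn, fun i h1 h2 => ?_, by rwa [Nat.add_sub_cancel], hright⟩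
  exact lt_of_le_of_ne (hle i (by omega) h2) (wrd_ne_of_ne σ hq1 hqn (by omega))

lemma exists_canHopRight_of_mem_hoppable (hx : x ∈ hoppable n σ) :
    ∃ ρ a b, CanHopRight n ρ a b ∧ wrd n ρ a = x ∧
      (σ = ρ ∧ hop n σ x = ρ * rotate n a b ∨ σ = ρ * rotate n a b ∧ hop n σ x = ρ) := by
  obtain ⟨⟨hx1, hxn⟩, hpv⟩ := mem_hoppable.1 hx
  obtain ⟨q, ⟨hq1, hqn⟩, rfl⟩ : ∃ q ∈ Set.Icc 1 n, wrd n σ q = x :=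
    ⟨_, pos_mem_Icc σ hx1 hxn, wrd_pos σ hx1 hxn⟩
  rw [IsPeakOrValley, pos_eq_of_wrd_eq σ hq1 hqn rfl] at hpv
  by_cases hdesc : wrd n σ (q + 1) < wrd n σ q
  · have h := canHopRight_nextGreater hq1 hqn hpv hdesc
    exact ⟨σ, _, _, h, rfl, Or.inl ⟨rfl, h.hop_eq⟩⟩
  · have h := canHopLeft_prevGreater hq1 hqn hpv hdesc
    set a := prevGreater n σ q (wrd n σ q) + 1
    have hσ : σ = σ * (rotate n a q)⁻¹ * rotate n a q := (inv_mul_cancel_right _ _).symm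
    have hρ : CanHopRight n (σ * (rotate n a q)⁻¹) a q :=
      canHopLeft_mul_rotate_iff.1 (hσ ▸ h)
    refine ⟨_, a, q, hρ, ?_, Or.inr ⟨hσ, h.hop_eq⟩⟩
    rw [← wrd_mul_rotate_right _ hρ.one_le hρ.lt.le hρ.le_n, ← hσ]

lemma hop_hop (hx : x ∈ hoppable n σ) : hop n (hop n σ x) x = σ := by
  obtain ⟨ρ, a, b, h, rfl, ⟨rfl, he⟩ | ⟨rfl, he⟩⟩ := exists_canHopRight_of_mem_hoppable hx
  · rw [he, h.hop_mul_rotate]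
  · rw [he, h.hop_eq]

lemma hoppable_hop (hx : x ∈ hoppable n σ) : hoppable n (hop n σ x) = hoppable n σ := by
  rcases exists_canHopRight_of_mem_hoppable hx with ⟨ρ, a, b, h, rfl, ⟨rfl, he⟩ | ⟨rfl, he⟩⟩ <;>
    rw [he, h.hoppable_mul_rotate]

lemma neg_one_pow_des_hop (hx : x ∈ hoppable n σ) :
    (-1 : ℤ) ^ des n (hop n σ x) = -(-1) ^ des n σ := by
  rcases exists_canHopRight_of_mem_hoppable hx with ⟨ρ, a, b, h, rfl, ⟨rfl, he⟩ | ⟨rfl, he⟩⟩ <;>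
    (rw [he, h.des_eq_des_mul_rotate_add_one, pow_succ]; ring)

end Hop

def hopMin (n : ℕ) (σ : Equiv.Perm (Fin n)) : Equiv.Perm (Fin n) :=
  if h : (hoppable n σ).Nonempty then hop n σ ((hoppable n σ).min' h) else σ

section HopMin

variable {n : ℕ}

lemma hopMin_of_nonempty {σ : Equiv.Perm (Fin n)} (h : (hoppable n σ).Nonempty) :
    hopMin n σ = hop n σ ((hoppable n σ).min' h) :=
  dif_pos h

lemma hopMin_of_empty {σ : Equiv.Perm (Fin n)} (h : ¬ (hoppable n σ).Nonempty) : hopMin n σ = σ :=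
  dif_neg h

lemma hoppable_hopMin (σ : Equiv.Perm (Fin n)) : hoppable n (hopMin n σ) = hoppable n σ := by
  by_cases h : (hoppable n σ).Nonempty
  · rw [hopMin_of_nonempty h, hoppable_hop (min'_mem _ h)]
  · rw [hopMin_of_empty h]

lemma hopMin_hopMin (σ : Equiv.Perm (Fin n)) : hopMin n (hopMin n σ) = σ := by
  by_cases h : (hoppable n σ).Nonempty
  · have e := hoppable_hopMin σ
    have hmin : (hoppable n (hopMin n σ)).min' (e ▸ h) = (hoppable n σ).min' h := by simp only [e]
    rw [hopMin_of_nonempty (e ▸ h), hmin, hopMin_of_nonempty h, hop_hop (min'_mem _ h)]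
  · rw [hopMin_of_empty h, hopMin_of_empty h]

lemma neg_one_pow_des_hopMin {σ : Equiv.Perm (Fin n)} (h : (hoppable n σ).Nonempty) :
    (-1 : ℤ) ^ des n (hopMin n σ) = -(-1) ^ des n σ := by
  rw [hopMin_of_nonempty h, neg_one_pow_des_hop (min'_mem _ h)]

end HopMin

lemma sum_neg_one_pow_des_of_hoppable_nonempty (n : ℕ) :
    ∑ σ : Equiv.Perm (Fin n) with (hoppable n σ).Nonempty, (-1 : ℤ) ^ des n σ = 0 := by
  refine sum_involution (fun σ _ => hopMin n σ) (fun σ hσ => ?_) (fun σ hσ hne he => hne ?_)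
    (fun σ hσ => ?_) (fun σ _ => hopMin_hopMin σ)
  · rw [neg_one_pow_des_hopMin (mem_filter.1 hσ).2, add_neg_cancel]
  · have := neg_one_pow_des_hopMin (mem_filter.1 hσ).2
    rw [he] at this
    omega
  · rw [mem_filter, hoppable_hopMin]
    exact ⟨mem_univ _, (mem_filter.1 hσ).2⟩

def IsZigzag (n : ℕ) (σ : Equiv.Perm (Fin n)) : Prop :=
  ∀ r ≤ n, (wrd n σ (r + 1) < wrd n σ r ↔ Even r)

section FixedPoints

variable {n : ℕ} {σ : Equiv.Perm (Fin n)}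

lemma isZigzag_of_hoppable_eq_empty (hn : 1 ≤ n) (h : hoppable n σ = ∅) : IsZigzag n σ := by
  intro r
  induction r with
  | zero =>
    intro _
    have := (wrd_mem_Icc σ le_rfl hn).2
    rw [zero_add, wrd_of_not_mem σ (i := 0) (by omega)]
    exact iff_of_true (by omega) ⟨0, rfl⟩
  | succ r ih =>
    intro hr
    have hpv : IsPeakOrValley n σ (wrd n σ (r + 1)) := by
      obtain ⟨h1, h2⟩ := wrd_mem_Icc σ (by omega : 1 ≤ r + 1) hr
      by_contra hc
      exact (eq_empty_iff_forall_notMem.1 h) _ (mem_hoppable.2 ⟨⟨h1, h2⟩, hc⟩)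
    rw [IsPeakOrValley, pos_eq_of_wrd_eq σ (by omega) hr rfl, Nat.add_sub_cancel] at hpv
    have := wrd_ne_of_ne σ (by omega : 1 ≤ r + 1) hr (show r + 1 + 1 ≠ r + 1 by omega)
    rw [Nat.even_add_one, ← ih (by omega)]
    omega

lemma hoppable_eq_empty_of_isZigzag (h : IsZigzag n σ) : hoppable n σ = ∅ := by
  refine eq_empty_iff_forall_notMem.2 fun v hv => ?_
  obtain ⟨⟨hv1, hvn⟩, hpv⟩ := mem_hoppable.1 hv
  obtain ⟨hq1, hqn⟩ := pos_mem_Icc σ hv1 hvn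
  have hwq := wrd_pos σ hv1 hvn
  have hl := h (pos n σ v - 1) (by omega)
  have hr := h (pos n σ v) hqn
  rw [Nat.sub_add_cancel hq1, hwq] at hl
  rw [hwq] at hr
  have hne1 := wrd_ne_of_ne σ hq1 hqn (show pos n σ v - 1 ≠ pos n σ v by omega)
  have hne2 := wrd_ne_of_ne σ hq1 hqn (show pos n σ v + 1 ≠ pos n σ v by omega)
  rw [hwq] at hne1 hne2
  rw [Nat.even_iff] at hl hr
  exact hpv (by rw [IsPeakOrValley]; omega)

lemma hoppable_eq_empty_iff_isZigzag (hn : 1 ≤ n) : hoppable n σ = ∅ ↔ IsZigzag n σ :=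
  ⟨isZigzag_of_hoppable_eq_empty hn, hoppable_eq_empty_of_isZigzag⟩

lemma isZigzag_iff_odd_and_isAlternating : IsZigzag n σ ↔ Odd n ∧ IsAlternating n σ := by
  simp only [IsZigzag, Nat.even_iff]
  constructor
  · intro h
    have hn : 1 ≤ n := by
      by_contra! hn
      have := (h 0 (Nat.zero_le n)).2 rfl
      rw [wrd_of_not_mem σ (by omega), wrd_of_not_mem σ (i := 0) (by omega)] at this
      omega
    have hlast := h n le_rfl
    rw [wrd_of_not_mem σ (i := n + 1) (by omega)] at hlast
    have := (wrd_mem_Icc σ hn le_rfl).2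
    refine ⟨Nat.odd_iff.2 (by omega), fun i hi => ?_⟩
    rw [mem_Icc] at hi
    have hi' := h i (by omega)
    have := wrd_ne_of_ne σ hi.1 (by omega) (show i + 1 ≠ i by omega)
    rw [Nat.odd_iff, Nat.even_iff]
    omega
  · rintro ⟨hodd, halt⟩ r hr
    rw [Nat.odd_iff] at hodd
    rcases (show r = 0 ∨ r = n ∨ r ∈ Icc 1 (n - 1) by simp only [mem_Icc]; omega) with
      rfl | rfl | hr'
    · have := (wrd_mem_Icc σ le_rfl (by omega)).2
      rw [zero_add, wrd_of_not_mem σ (i := 0) (by omega)]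
      omega
    · have := (wrd_mem_Icc σ (by omega) le_rfl).2
      rw [wrd_of_not_mem σ (i := r + 1) (by omega)]
      omega
    · have := halt r hr'
      rw [Nat.odd_iff, Nat.even_iff] at this
      omega

lemma des_of_isAlternating (h : IsAlternating n σ) : des n σ = (n - 1) / 2 := by
  have hfilter : {i ∈ Icc 1 (n - 1) | wrd n σ (i + 1) < wrd n σ i} = {i ∈ Ioc 0 (n - 1) | 2 ∣ i} := by
    rw [← Icc_add_one_left_eq_Ioc, zero_add]
    refine filter_congr fun i hi => ?_
    obtain ⟨hodd, heven⟩ := h i hi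
    rw [← even_iff_two_dvd]
    rcases Nat.even_or_odd i with he | ho
    · exact iff_of_true (heven he) he
    · exact iff_of_false (not_lt.2 (hodd ho).le) (Nat.not_even_iff_odd.2 ho)
  rw [des, hfilter, Nat.Ioc_filter_dvd_card_eq_div]

end FixedPoints

theorem eulerian_neg_one (n : ℕ) (hn : 1 ≤ n) :
    (∑ π : Equiv.Perm (Fin n), (-1 : ℤ) ^ des n π) =
      if Odd n then (-1 : ℤ) ^ ((n - 1) / 2) * eulerNumber n else 0 := by
  rw [← sum_filter_add_sum_filter_not univ (fun π => (hoppable n π).Nonempty),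
    sum_neg_one_pow_des_of_hoppable_nonempty, zero_add]
  simp only [not_nonempty_iff_eq_empty, hoppable_eq_empty_iff_isZigzag hn,
    isZigzag_iff_odd_and_isAlternating]
  split_ifs with hodd
  · simp only [hodd, true_and]
    rw [sum_congr rfl fun π hπ => by rw [des_of_isAlternating (mem_filter.1 hπ).2], sum_const,
      nsmul_eq_mul, mul_comm, eulerNumber]
  · simp [hodd]
end

section
/- For all n ≥ 1, the polynomial P_n^{ddes}(t) = Σ_{π ∈ S_n} t^{ddes(π)} evaluated at t = -1 equals E_n if n is odd, and 0 if n is even, where E_n is the n-th Euler number. -/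
/-- Number of double ascents: positions `1 ≤ i ≤ n` with `π_{i-1} < π_i < π_{i+1}`. -/
def dasc (n : ℕ) (π : Equiv.Perm (Fin n)) : ℕ :=
  ((Finset.Icc 1 n).filter
    (fun i => wrd n π (i - 1) < wrd n π i ∧ wrd n π i < wrd n π (i + 1))).card

/-- Number of double descents: positions `1 ≤ i ≤ n` with `π_{i-1} > π_i > π_{i+1}`. -/
def ddes (n : ℕ) (π : Equiv.Perm (Fin n)) : ℕ :=
  ((Finset.Icc 1 n).filter
    (fun i => wrd n π i < wrd n π (i - 1) ∧ wrd n π (i + 1) < wrd n π i)).card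

set_option linter.unreachableTactic false
set_option linter.unusedTactic false

namespace DP
open Finset

variable {n : ℕ} (π : Equiv.Perm (Fin n))

lemma wrd_out {i : ℕ} (h : ¬(1 ≤ i ∧ i ≤ n)) : wrd n π i = n + 2 := by
  unfold wrd; rw [dif_neg h]

lemma wrd_le {i : ℕ} (h1 : 1 ≤ i) (h2 : i ≤ n) : wrd n π i ≤ n := by
  unfold wrd; rw [dif_pos ⟨h1, h2⟩]
  have := (π ⟨i - 1, by omega⟩).isLt; omega

lemma wrd_pos {i : ℕ} : 1 ≤ wrd n π i := by
  unfold wrd; split_ifs <;> omega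

lemma wrd_inj {i j : ℕ} (h1 : 1 ≤ i) (h2 : i ≤ n) (h3 : 1 ≤ j) (h4 : j ≤ n)
    (h : wrd n π i = wrd n π j) : i = j := by
  unfold wrd at h
  rw [dif_pos ⟨h1, h2⟩, dif_pos ⟨h3, h4⟩] at h
  have := π.injective (Fin.ext (by omega : ((π ⟨i-1, by omega⟩ : Fin n) : ℕ) = (π ⟨j-1, by omega⟩ : Fin n)))
  have := Fin.mk.inj_iff.mp this
  omega

def posOf (π : Equiv.Perm (Fin n)) (v : Fin n) : ℕ := (π.symm v : ℕ) + 1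

lemma posOf_ge (v : Fin n) : 1 ≤ posOf π v := Nat.le_add_left 1 _
lemma posOf_le (v : Fin n) : posOf π v ≤ n := (π.symm v).isLt

lemma wrd_posOf (v : Fin n) : wrd n π (posOf π v) = (v : ℕ) + 1 := by
  unfold wrd posOf
  rw [dif_pos ⟨Nat.le_add_left 1 _, (π.symm v).isLt⟩]
  congr 1
  have : (⟨(π.symm v : ℕ) + 1 - 1, by omega⟩ : Fin n) = π.symm v := Fin.ext (by simp)
  rw [this, Equiv.apply_symm_apply]

lemma posOf_unique {v : Fin n} {p : ℕ} (h1 : 1 ≤ p) (h2 : p ≤ n)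
    (h : wrd n π p = (v : ℕ) + 1) : posOf π v = p :=
  wrd_inj π (posOf_ge π v) (posOf_le π v) h1 h2 (by rw [wrd_posOf, h])

def isDA (π : Equiv.Perm (Fin n)) (i : ℕ) : Prop :=
  wrd n π (i - 1) < wrd n π i ∧ wrd n π i < wrd n π (i + 1)

def isDD (π : Equiv.Perm (Fin n)) (i : ℕ) : Prop :=
  wrd n π i < wrd n π (i - 1) ∧ wrd n π (i + 1) < wrd n π i

instance : DecidablePred (isDA π) := fun _ => by unfold isDA; infer_instance
instance : DecidablePred (isDD π) := fun _ => by unfold isDD; infer_instance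

def cycf (n a b : ℕ) (k : Fin n) : Fin n :=
  if h : a ≤ (k : ℕ) ∧ (k : ℕ) < b ∧ b < n then ⟨(k : ℕ) + 1, by omega⟩
    else if h2 : (k : ℕ) = b ∧ a ≤ b ∧ b < n then ⟨a, by omega⟩ else k
def cycg (n a b : ℕ) (k : Fin n) : Fin n :=
  if h : a < (k : ℕ) ∧ (k : ℕ) ≤ b ∧ b < n then ⟨(k : ℕ) - 1, by omega⟩
    else if h2 : (k : ℕ) = a ∧ a ≤ b ∧ b < n then ⟨b, h2.2.2⟩ else k

lemma cycf_val (n a b : ℕ) (k : Fin n) : ((cycf n a b k) : ℕ) =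
    if a ≤ (k : ℕ) ∧ (k : ℕ) < b ∧ b < n then (k : ℕ) + 1
      else if (k : ℕ) = b ∧ a ≤ b ∧ b < n then a else (k : ℕ) := by
  unfold cycf; split_ifs <;> rfl

lemma cycg_val (n a b : ℕ) (k : Fin n) : ((cycg n a b k) : ℕ) =
    if a < (k : ℕ) ∧ (k : ℕ) ≤ b ∧ b < n then (k : ℕ) - 1
      else if (k : ℕ) = a ∧ a ≤ b ∧ b < n then b else (k : ℕ) := by
  unfold cycg; split_ifs <;> rfl

def cyc (n a b : ℕ) : Equiv.Perm (Fin n) where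
  toFun := cycf n a b
  invFun := cycg n a b
  left_inv := by
    intro k; apply Fin.ext; rw [cycg_val, cycf_val]
    split_ifs <;> simp_all <;> omega
  right_inv := by
    intro k; apply Fin.ext; rw [cycf_val, cycg_val]
    split_ifs <;> simp_all <;> omega

lemma cyc_apply (n a b : ℕ) (k : Fin n) : (((cyc n a b) k) : ℕ) =
    if a ≤ (k : ℕ) ∧ (k : ℕ) < b ∧ b < n then (k : ℕ) + 1
      else if (k : ℕ) = b ∧ a ≤ b ∧ b < n then a else (k : ℕ) := cycf_val n a b k

lemma cyc_inv_apply (n a b : ℕ) (k : Fin n) : (((cyc n a b)⁻¹) k : ℕ) =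
    if a < (k : ℕ) ∧ (k : ℕ) ≤ b ∧ b < n then (k : ℕ) - 1
      else if (k : ℕ) = a ∧ a ≤ b ∧ b < n then b else (k : ℕ) := cycg_val n a b k

lemma wrd_mul (c : Equiv.Perm (Fin n)) {q : ℕ} (h1 : 1 ≤ q) (h2 : q ≤ n) :
    wrd n (π * c) q = wrd n π (((c ⟨q - 1, by omega⟩ : Fin n) : ℕ) + 1) := by
  unfold wrd
  rw [dif_pos ⟨h1, h2⟩, dif_pos ⟨Nat.le_add_left 1 _, Nat.succ_le_of_lt (c ⟨q-1, by omega⟩).isLt⟩]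
  simp only [Equiv.Perm.coe_mul, Function.comp_apply, Nat.add_sub_cancel]


section Hop
variable {π : Equiv.Perm (Fin n)} (x : Fin n)

/-- the first position strictly right of `posOf π x` whose value exceeds `x+1`. -/
def jR (π : Equiv.Perm (Fin n)) (x : Fin n) : ℕ :=
  ((Finset.Icc (posOf π x + 1) (n+1)).filter (fun j => (x : ℕ) + 1 < wrd n π j)).min'
    ⟨n+1, by
      simp only [Finset.mem_filter, Finset.mem_Icc]
      refine ⟨⟨by have := posOf_le π x; omega, le_refl _⟩, ?_⟩
      rw [wrd_out π (by omega)]; have := x.isLt; omega⟩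

/-- the last position strictly left of `posOf π x` whose value exceeds `x+1`. -/
def jL (π : Equiv.Perm (Fin n)) (x : Fin n) : ℕ :=
  ((Finset.Icc 0 (posOf π x - 1)).filter (fun j => (x : ℕ) + 1 < wrd n π j)).max'
    ⟨0, by
      simp only [Finset.mem_filter, Finset.mem_Icc]
      refine ⟨⟨Nat.zero_le _, Nat.zero_le _⟩, ?_⟩
      rw [wrd_out π (by omega)]; have := x.isLt; omega⟩

lemma jR_ne : ((Finset.Icc (posOf π x + 1) (n+1)).filter (fun j => (x : ℕ) + 1 < wrd n π j)).Nonempty :=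
  ⟨n+1, by
    simp only [Finset.mem_filter, Finset.mem_Icc]
    refine ⟨⟨by have := posOf_le π x; omega, le_refl _⟩, ?_⟩
    rw [wrd_out π (by omega)]; have := x.isLt; omega⟩

lemma jL_ne : ((Finset.Icc 0 (posOf π x - 1)).filter (fun j => (x : ℕ) + 1 < wrd n π j)).Nonempty :=
  ⟨0, by
    simp only [Finset.mem_filter, Finset.mem_Icc]
    refine ⟨⟨Nat.zero_le _, Nat.zero_le _⟩, ?_⟩
    rw [wrd_out π (by omega)]; have := x.isLt; omega⟩

lemma jR_mem : jR π x ∈ ((Finset.Icc (posOf π x + 1) (n+1)).filter (fun j => (x : ℕ) + 1 < wrd n π j)) :=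
  Finset.min'_mem _ (jR_ne x)

lemma jL_mem : jL π x ∈ ((Finset.Icc 0 (posOf π x - 1)).filter (fun j => (x : ℕ) + 1 < wrd n π j)) :=
  Finset.max'_mem _ (jL_ne x)

lemma jR_gt : posOf π x < jR π x := by
  have h := jR_mem (π := π) x
  rw [Finset.mem_filter, Finset.mem_Icc] at h
  omega

lemma jR_le : jR π x ≤ n + 1 := by
  have h := jR_mem (π := π) x
  rw [Finset.mem_filter, Finset.mem_Icc] at h
  omega

lemma jR_big : (x : ℕ) + 1 < wrd n π (jR π x) := by
  have h := jR_mem (π := π) x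
  rw [Finset.mem_filter] at h
  exact h.2

lemma jR_min {k : ℕ} (h1 : posOf π x < k) (h2 : k < jR π x) : wrd n π k < (x : ℕ) + 1 := by
  by_contra hc
  push_neg at hc
  have hkn : k ≤ n := by have := jR_le (π := π) x; omega
  have hne : wrd n π k ≠ (x : ℕ) + 1 := by
    intro he
    have := posOf_unique π (by omega) hkn he
    omega
  have hmem : k ∈ (Finset.Icc (posOf π x + 1) (n+1)).filter (fun j => (x : ℕ) + 1 < wrd n π j) := by
    rw [Finset.mem_filter, Finset.mem_Icc]
    exact ⟨⟨by omega, by omega⟩, by omega⟩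
  have h3 : jR π x ≤ k := Finset.min'_le _ k hmem
  omega

lemma jL_lt : jL π x < posOf π x := by
  have h := jL_mem (π := π) x
  rw [Finset.mem_filter, Finset.mem_Icc] at h
  have := posOf_ge π x
  omega

lemma jL_big : (x : ℕ) + 1 < wrd n π (jL π x) := by
  have h := jL_mem (π := π) x
  rw [Finset.mem_filter] at h
  exact h.2

lemma jL_max {k : ℕ} (h1 : jL π x < k) (h2 : k < posOf π x) : wrd n π k < (x : ℕ) + 1 := by
  by_contra hc
  push_neg at hc
  have hk1 : 1 ≤ k := by omega
  have hkn : k ≤ n := by have := posOf_le π x; omega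
  have hne : wrd n π k ≠ (x : ℕ) + 1 := by
    intro he
    have := posOf_unique π hk1 hkn he
    omega
  have hmem : k ∈ (Finset.Icc 0 (posOf π x - 1)).filter (fun j => (x : ℕ) + 1 < wrd n π j) := by
    rw [Finset.mem_filter, Finset.mem_Icc]
    exact ⟨⟨Nat.zero_le _, by omega⟩, by omega⟩
  have h3 : k ≤ jL π x := Finset.le_max' _ k hmem
  omega

/-- hop for a double-descent letter `x`: move `x` rightwards past the smaller block. -/
def hopD (π : Equiv.Perm (Fin n)) (x : Fin n) : Equiv.Perm (Fin n) :=
  π * cyc n (posOf π x - 1) (jR π x - 2)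

/-- hop for a double-ascent letter `x`: move `x` leftwards past the smaller block. -/
def hopA (π : Equiv.Perm (Fin n)) (x : Fin n) : Equiv.Perm (Fin n) :=
  π * (cyc n (jL π x) (posOf π x - 1))⁻¹


lemma isDD_lt_n (hx : isDD π (posOf π x)) : posOf π x < n := by
  have h1 := posOf_ge π x
  have h2 := posOf_le π x
  rcases Nat.lt_or_ge (posOf π x) n with h | h
  · exact h
  · exfalso
    have he : posOf π x = n := by omega
    have := hx.2
    rw [he, wrd_out π (by omega)] at this
    have := wrd_le π (i := n) (by omega) (le_refl n)
    omega

lemma isDD_jR (hx : isDD π (posOf π x)) : posOf π x + 2 ≤ jR π x := by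
  have h1 := jR_gt (π := π) x
  rcases Nat.lt_or_ge (posOf π x + 1) (jR π x) with h | h
  · omega
  · exfalso
    have he : jR π x = posOf π x + 1 := by omega
    have hb := jR_big (π := π) x
    rw [he] at hb
    have := hx.2
    rw [wrd_posOf] at this
    omega

lemma wrd_hopD_mid (hx : isDD π (posOf π x)) {q : ℕ} (h1 : posOf π x ≤ q)
    (h2 : q ≤ jR π x - 2) : wrd n (hopD π x) q = wrd n π (q + 1) := by
  have hj := isDD_jR x hx
  have hjle := jR_le (π := π) x
  have hi1 := posOf_ge π x
  rw [hopD, wrd_mul π _ (by omega) (by omega)]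
  have hc : (((cyc n (posOf π x - 1) (jR π x - 2)) ⟨q - 1, by omega⟩ : Fin n) : ℕ) = q := by
    rw [cyc_apply]; simp only [Fin.val_mk]; split_ifs <;> omega
  rw [hc]

lemma wrd_hopD_x (hx : isDD π (posOf π x)) :
    wrd n (hopD π x) (jR π x - 1) = (x : ℕ) + 1 := by
  have hj := isDD_jR x hx
  have hjle := jR_le (π := π) x
  have hi1 := posOf_ge π x
  have hin := posOf_le π x
  rw [hopD, wrd_mul π _ (by omega) (by omega)]
  have hc : (((cyc n (posOf π x - 1) (jR π x - 2)) ⟨jR π x - 1 - 1, by omega⟩ : Fin n) : ℕ)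
      = posOf π x - 1 := by
    rw [cyc_apply]; simp only [Fin.val_mk]; split_ifs <;> omega
  rw [hc]
  have : posOf π x - 1 + 1 = posOf π x := by omega
  rw [this, wrd_posOf]

lemma wrd_hopD_out (hx : isDD π (posOf π x)) {q : ℕ}
    (h : q < posOf π x ∨ jR π x - 1 < q) : wrd n (hopD π x) q = wrd n π q := by
  have hj := isDD_jR x hx
  have hjle := jR_le (π := π) x
  have hi1 := posOf_ge π x
  by_cases hq : 1 ≤ q ∧ q ≤ n
  · rw [hopD, wrd_mul π _ hq.1 hq.2]
    have hc : (((cyc n (posOf π x - 1) (jR π x - 2)) ⟨q - 1, by omega⟩ : Fin n) : ℕ) = q - 1 := by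
      rw [cyc_apply]; simp only [Fin.val_mk]; split_ifs <;> omega
    rw [hc]
    congr 1
    omega
  · rw [wrd_out _ hq, wrd_out _ hq]

lemma posOf_inj {v w : Fin n} (h : posOf π v = posOf π w) : v = w := by
  have : π.symm v = π.symm w := Fin.ext (by unfold posOf at h; omega)
  exact π.symm.injective this

lemma isDD_F1 (hx : isDD π (posOf π x)) : wrd n π (posOf π x + 1) < (x : ℕ) + 1 := by
  have := hx.2; rwa [wrd_posOf] at this

lemma isDD_F2 (hx : isDD π (posOf π x)) : (x : ℕ) + 1 < wrd n π (posOf π x - 1) := by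
  have := hx.1; rwa [wrd_posOf] at this

lemma posOf_hopD_x (hx : isDD π (posOf π x)) : posOf (hopD π x) x = jR π x - 1 := by
  have hij := isDD_jR x hx
  have hjle := jR_le (π := π) x
  exact posOf_unique _ (by omega) (by omega) (wrd_hopD_x x hx)

lemma posOf_hopD_lt (hx : isDD π (posOf π x)) {v : Fin n} (h : posOf π v < posOf π x) :
    posOf (hopD π x) v = posOf π v :=
  posOf_unique _ (posOf_ge π v) (posOf_le π v)
    (by rw [wrd_hopD_out x hx (Or.inl h), wrd_posOf])

lemma posOf_hopD_mid (hx : isDD π (posOf π x)) {v : Fin n} (h1 : posOf π x < posOf π v)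
    (h2 : posOf π v ≤ jR π x - 1) : posOf (hopD π x) v = posOf π v - 1 := by
  have hij := isDD_jR x hx
  have hi1 := posOf_ge π x
  refine posOf_unique _ (by omega) (by have := posOf_le π v; omega) ?_
  rw [wrd_hopD_mid x hx (by omega) (by omega),
    show posOf π v - 1 + 1 = posOf π v from by omega]
  exact wrd_posOf π v

lemma posOf_hopD_gt (hx : isDD π (posOf π x)) {v : Fin n} (h : jR π x ≤ posOf π v) :
    posOf (hopD π x) v = posOf π v := by
  have h2 : jR π x - 1 < posOf π v := by have := jR_gt (π := π) x; omega
  exact posOf_unique _ (posOf_ge π v) (posOf_le π v)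
    (by rw [wrd_hopD_out x hx (Or.inr h2), wrd_posOf])

lemma hopD_isDA_x (hx : isDD π (posOf π x)) : isDA (hopD π x) (posOf (hopD π x) x) := by
  have hij := isDD_jR x hx
  have hjle := jR_le (π := π) x
  have hi1 := posOf_ge π x
  rw [posOf_hopD_x x hx]
  constructor
  · rw [wrd_hopD_x x hx, show jR π x - 1 - 1 = jR π x - 2 from by omega,
      wrd_hopD_mid x hx (by omega) (le_refl _),
      show jR π x - 2 + 1 = jR π x - 1 from by omega]
    exact jR_min x (by omega) (by omega)
  · rw [wrd_hopD_x x hx, show jR π x - 1 + 1 = jR π x from by omega,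
      wrd_hopD_out x hx (Or.inr (by omega))]
    exact jR_big x

lemma LR_hopD (hx : isDD π (posOf π x)) (v : Fin n) (hv : v ≠ x) :
    (wrd n (hopD π x) (posOf (hopD π x) v - 1) < (v : ℕ) + 1 ↔
      wrd n π (posOf π v - 1) < (v : ℕ) + 1) ∧
    ((v : ℕ) + 1 < wrd n (hopD π x) (posOf (hopD π x) v + 1) ↔
      (v : ℕ) + 1 < wrd n π (posOf π v + 1)) := by
  have hq1 := posOf_ge π v
  have hqn := posOf_le π v
  have hij := isDD_jR x hx
  have hjle := jR_le (π := π) x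
  have hi1 := posOf_ge π x
  have hin := posOf_le π x
  have hF1 := isDD_F1 x hx
  have hF2 := isDD_F2 x hx
  have hF4 := jR_big (π := π) x
  have hqi : posOf π v ≠ posOf π x := fun he => hv (posOf_inj he)
  have hvv := wrd_posOf π v
  rcases lt_trichotomy (posOf π v) (posOf π x) with hlt | heq | hgt
  · -- v left of x : position unchanged
    rw [posOf_hopD_lt x hx hlt]
    constructor
    · rw [wrd_hopD_out x hx (Or.inl (by omega))]
    · by_cases hq : posOf π v + 1 = posOf π x
      · rw [hq, wrd_hopD_mid x hx (le_refl _) (by omega), wrd_posOf]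
        have hvv2 := wrd_posOf π v
        rw [show posOf π v = posOf π x - 1 from by omega] at hvv2
        omega
      · rw [wrd_hopD_out x hx (Or.inl (by omega))]
  · exact absurd heq hqi
  · rcases Nat.lt_or_ge (posOf π v) (jR π x) with hltj | hgej
    · -- middle block : position shifts down by 1
      rw [posOf_hopD_mid x hx hgt (by omega)]
      have hsmall : wrd n π (posOf π v) < (x : ℕ) + 1 := jR_min x hgt hltj
      constructor
      · by_cases hq : posOf π v = posOf π x + 1
        · rw [show posOf π v - 1 - 1 = posOf π x - 1 from by omega,
            wrd_hopD_out x hx (Or.inl (by omega)),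
            show posOf π v - 1 = posOf π x from by omega, wrd_posOf]
          omega
        · rw [show posOf π v - 1 - 1 = posOf π v - 2 from rfl,
            wrd_hopD_mid x hx (by omega) (by omega),
            show posOf π v - 2 + 1 = posOf π v - 1 from by omega]
      · rw [show posOf π v - 1 + 1 = posOf π v from by omega]
        by_cases hq : posOf π v = jR π x - 1
        · rw [hq] at hvv hsmall ⊢
          rw [wrd_hopD_x x hx, show jR π x - 1 + 1 = jR π x from by omega]
          omega
        · rw [wrd_hopD_mid x hx (by omega) (by omega)]
    · -- right of the block : position unchanged
      rw [posOf_hopD_gt x hx hgej]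
      constructor
      · by_cases hq : posOf π v = jR π x
        · rw [show posOf π v - 1 = jR π x - 1 from by omega, wrd_hopD_x x hx]
          rw [hq] at hvv
          have hsm : wrd n π (jR π x - 1) < (x : ℕ) + 1 := jR_min x (by omega) (by omega)
          omega
        · rw [wrd_hopD_out x hx (Or.inr (by omega))]
      · rw [wrd_hopD_out x hx (Or.inr (by omega))]

lemma isDA_gt_1 (hx : isDA π (posOf π x)) : 1 < posOf π x := by
  have h1 := posOf_ge π x
  rcases Nat.lt_or_ge 1 (posOf π x) with h | h
  · exact h
  · exfalso
    have he : posOf π x = 1 := by omega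
    have := hx.1
    rw [he, wrd_out π (by omega)] at this
    have := wrd_le π (i := 1) (le_refl 1) (by have := posOf_le π x; omega)
    omega

lemma isDA_jL (hx : isDA π (posOf π x)) : jL π x + 2 ≤ posOf π x := by
  have h1 := jL_lt (π := π) x
  rcases Nat.lt_or_ge (jL π x + 1) (posOf π x) with h | h
  · omega
  · exfalso
    have he : jL π x = posOf π x - 1 := by omega
    have hb := jL_big (π := π) x
    rw [he] at hb
    have := hx.1
    rw [wrd_posOf] at this
    omega

lemma isDA_F1 (hx : isDA π (posOf π x)) : (x : ℕ) + 1 < wrd n π (posOf π x + 1) := by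
  have := hx.2; rwa [wrd_posOf] at this

lemma isDA_F2 (hx : isDA π (posOf π x)) : wrd n π (posOf π x - 1) < (x : ℕ) + 1 := by
  have := hx.1; rwa [wrd_posOf] at this

lemma wrd_hopA_mid (hx : isDA π (posOf π x)) {q : ℕ} (h1 : jL π x + 2 ≤ q)
    (h2 : q ≤ posOf π x) : wrd n (hopA π x) q = wrd n π (q - 1) := by
  have hj := isDA_jL x hx
  have hin := posOf_le π x
  rw [hopA, wrd_mul π _ (by omega) (by omega)]
  have hc : ((((cyc n (jL π x) (posOf π x - 1))⁻¹) ⟨q - 1, by omega⟩ : Fin n) : ℕ) = q - 2 := by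
    rw [cyc_inv_apply]; simp only [Fin.val_mk]; split_ifs <;> omega
  rw [hc]
  congr 1
  omega

lemma wrd_hopA_x (hx : isDA π (posOf π x)) :
    wrd n (hopA π x) (jL π x + 1) = (x : ℕ) + 1 := by
  have hj := isDA_jL x hx
  have hin := posOf_le π x
  rw [hopA, wrd_mul π _ (by omega) (by omega)]
  have hc : ((((cyc n (jL π x) (posOf π x - 1))⁻¹) ⟨jL π x + 1 - 1, by omega⟩ : Fin n) : ℕ)
      = posOf π x - 1 := by
    rw [cyc_inv_apply]; simp only [Fin.val_mk]; split_ifs <;> omega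
  rw [hc, show posOf π x - 1 + 1 = posOf π x from by omega, wrd_posOf]

lemma wrd_hopA_out (hx : isDA π (posOf π x)) {q : ℕ}
    (h : q ≤ jL π x ∨ posOf π x < q) : wrd n (hopA π x) q = wrd n π q := by
  have hj := isDA_jL x hx
  have hin := posOf_le π x
  by_cases hq : 1 ≤ q ∧ q ≤ n
  · rw [hopA, wrd_mul π _ hq.1 hq.2]
    have hc : ((((cyc n (jL π x) (posOf π x - 1))⁻¹) ⟨q - 1, by omega⟩ : Fin n) : ℕ) = q - 1 := by
      rw [cyc_inv_apply]; simp only [Fin.val_mk]; split_ifs <;> omega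
    rw [hc]
    congr 1
    omega
  · rw [wrd_out _ hq, wrd_out _ hq]

lemma posOf_hopA_x (hx : isDA π (posOf π x)) : posOf (hopA π x) x = jL π x + 1 := by
  have hj := isDA_jL x hx
  have hin := posOf_le π x
  exact posOf_unique _ (by omega) (by omega) (wrd_hopA_x x hx)

lemma posOf_hopA_lt (hx : isDA π (posOf π x)) {v : Fin n} (h : posOf π v ≤ jL π x) :
    posOf (hopA π x) v = posOf π v :=
  posOf_unique _ (posOf_ge π v) (posOf_le π v)
    (by rw [wrd_hopA_out x hx (Or.inl h), wrd_posOf])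

lemma posOf_hopA_mid (hx : isDA π (posOf π x)) {v : Fin n} (h1 : jL π x + 1 ≤ posOf π v)
    (h2 : posOf π v < posOf π x) : posOf (hopA π x) v = posOf π v + 1 := by
  have hin := posOf_le π x
  refine posOf_unique _ (by omega) (by omega) ?_
  rw [wrd_hopA_mid x hx (by omega) (by omega),
    show posOf π v + 1 - 1 = posOf π v from by omega]
  exact wrd_posOf π v

lemma posOf_hopA_gt (hx : isDA π (posOf π x)) {v : Fin n} (h : posOf π x < posOf π v) :
    posOf (hopA π x) v = posOf π v :=
  posOf_unique _ (posOf_ge π v) (posOf_le π v)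
    (by rw [wrd_hopA_out x hx (Or.inr h), wrd_posOf])

lemma hopA_isDD_x (hx : isDA π (posOf π x)) : isDD (hopA π x) (posOf (hopA π x) x) := by
  have hj := isDA_jL x hx
  have hin := posOf_le π x
  rw [posOf_hopA_x x hx]
  constructor
  · rw [wrd_hopA_x x hx, show jL π x + 1 - 1 = jL π x from by omega,
      wrd_hopA_out x hx (Or.inl (le_refl _))]
    exact jL_big x
  · rw [wrd_hopA_x x hx, show jL π x + 1 + 1 = jL π x + 2 from rfl,
      wrd_hopA_mid x hx (le_refl _) (by omega),
      show jL π x + 2 - 1 = jL π x + 1 from by omega]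
    exact jL_max x (by omega) (by omega)

lemma LR_hopA (hx : isDA π (posOf π x)) (v : Fin n) (hv : v ≠ x) :
    (wrd n (hopA π x) (posOf (hopA π x) v - 1) < (v : ℕ) + 1 ↔
      wrd n π (posOf π v - 1) < (v : ℕ) + 1) ∧
    ((v : ℕ) + 1 < wrd n (hopA π x) (posOf (hopA π x) v + 1) ↔
      (v : ℕ) + 1 < wrd n π (posOf π v + 1)) := by
  have hq1 := posOf_ge π v
  have hqn := posOf_le π v
  have hij := isDA_jL x hx
  have hi1 := isDA_gt_1 x hx
  have hin := posOf_le π x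
  have hF1 := isDA_F1 x hx
  have hF2 := isDA_F2 x hx
  have hF4 := jL_big (π := π) x
  have hqi : posOf π v ≠ posOf π x := fun he => hv (posOf_inj he)
  have hvv := wrd_posOf π v
  rcases lt_trichotomy (posOf π v) (posOf π x) with hlt | heq | hgt
  · rcases Nat.lt_or_ge (jL π x) (posOf π v) with hgtl | hlel
    · -- middle block : position shifts up by 1
      rw [posOf_hopA_mid x hx (by omega) hlt]
      have hsmall : wrd n π (posOf π v) < (x : ℕ) + 1 := jL_max x hgtl hlt
      constructor
      · rw [show posOf π v + 1 - 1 = posOf π v from by omega]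
        by_cases hq : posOf π v = jL π x + 1
        · rw [hq] at hvv hsmall ⊢
          rw [wrd_hopA_x x hx, show jL π x + 1 - 1 = jL π x from by omega]
          omega
        · rw [wrd_hopA_mid x hx (by omega) (by omega)]
      · by_cases hq : posOf π v = posOf π x - 1
        · rw [show posOf π v + 1 + 1 = posOf π x + 1 from by omega,
            wrd_hopA_out x hx (Or.inr (by omega)),
            show posOf π v + 1 = posOf π x from by omega, wrd_posOf]
          rw [hq] at hvv hsmall
          omega
        · rw [show posOf π v + 1 + 1 = posOf π v + 2 from rfl,
            wrd_hopA_mid x hx (by omega) (by omega),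
            show posOf π v + 2 - 1 = posOf π v + 1 from by omega]
    · -- left of the block : position unchanged
      rw [posOf_hopA_lt x hx hlel]
      constructor
      · have h2 : posOf π v - 1 ≤ jL π x := by omega
        rw [wrd_hopA_out x hx (Or.inl h2)]
      · by_cases hq : posOf π v = jL π x
        · rw [hq] at hvv ⊢
          rw [show jL π x + 1 = jL π x + 1 from rfl, wrd_hopA_x x hx]
          have hsm : wrd n π (jL π x + 1) < (x : ℕ) + 1 := jL_max x (by omega) (by omega)
          omega
        · have h2 : posOf π v + 1 ≤ jL π x := by omega
          rw [wrd_hopA_out x hx (Or.inl h2)]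
  · exact absurd heq hqi
  · -- right of x : position unchanged
    rw [posOf_hopA_gt x hx hgt]
    constructor
    · by_cases hq : posOf π v = posOf π x + 1
      · rw [show posOf π v - 1 = posOf π x from by omega,
          wrd_hopA_mid x hx (by omega) (le_refl _)]
        rw [hq] at hvv
        have hpx := wrd_posOf π x
        omega
      · have h2 : posOf π x < posOf π v - 1 := by omega
        rw [wrd_hopA_out x hx (Or.inr h2)]
    · have h2 : posOf π x < posOf π v + 1 := by omega
      rw [wrd_hopA_out x hx (Or.inr h2)]

lemma ne_left (v : Fin n) : wrd n π (posOf π v - 1) ≠ (v : ℕ) + 1 := by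
  have h1 := posOf_ge π v
  have h2 := posOf_le π v
  intro he
  by_cases hb : 1 ≤ posOf π v - 1 ∧ posOf π v - 1 ≤ n
  · have := wrd_inj π hb.1 hb.2 h1 h2 (by rw [he, wrd_posOf])
    omega
  · rw [wrd_out π hb] at he
    have := v.isLt
    omega

lemma ne_right (v : Fin n) : wrd n π (posOf π v + 1) ≠ (v : ℕ) + 1 := by
  have h1 := posOf_ge π v
  have h2 := posOf_le π v
  intro he
  by_cases hb : 1 ≤ posOf π v + 1 ∧ posOf π v + 1 ≤ n
  · have := wrd_inj π hb.1 hb.2 h1 h2 (by rw [he, wrd_posOf])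
    omega
  · rw [wrd_out π hb] at he
    have := v.isLt
    omega

lemma isDA_posOf_iff (v : Fin n) : isDA π (posOf π v) ↔
    (wrd n π (posOf π v - 1) < (v : ℕ) + 1 ∧ (v : ℕ) + 1 < wrd n π (posOf π v + 1)) := by
  unfold isDA; rw [wrd_posOf]

lemma isDD_posOf_iff (v : Fin n) : isDD π (posOf π v) ↔
    (¬(wrd n π (posOf π v - 1) < (v : ℕ) + 1) ∧ ¬((v : ℕ) + 1 < wrd n π (posOf π v + 1))) := by
  unfold isDD; rw [wrd_posOf]
  have h1 := ne_left (π := π) v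
  have h2 := ne_right (π := π) v
  omega

lemma isDA_not_isDD {i : ℕ} (h : isDA π i) : ¬ isDD π i := by
  intro h2
  have := h.1
  have := h2.1
  omega

def ddL (π : Equiv.Perm (Fin n)) : Finset (Fin n) :=
  Finset.univ.filter (fun v => isDD π (posOf π v))

def badL (π : Equiv.Perm (Fin n)) : Finset (Fin n) :=
  Finset.univ.filter (fun v => isDA π (posOf π v) ∨ isDD π (posOf π v))

lemma ddL_hopD (hx : isDD π (posOf π x)) : ddL (hopD π x) = (ddL π).erase x := by
  ext v
  simp only [ddL, Finset.mem_filter, Finset.mem_univ, true_and, Finset.mem_erase]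
  by_cases hv : v = x
  · subst hv
    simp only [ne_eq, not_true_eq_false, false_and, iff_false]
    exact isDA_not_isDD (hopD_isDA_x v hx)
  · rw [isDD_posOf_iff, isDD_posOf_iff]
    have h := LR_hopD x hx v hv
    rw [h.1, h.2]
    simp [hv]

lemma badL_hopD (hx : isDD π (posOf π x)) : badL (hopD π x) = badL π := by
  ext v
  simp only [badL, Finset.mem_filter, Finset.mem_univ, true_and]
  by_cases hv : v = x
  · subst hv
    exact iff_of_true (Or.inl (hopD_isDA_x v hx)) (Or.inr hx)
  · rw [isDD_posOf_iff, isDD_posOf_iff, isDA_posOf_iff, isDA_posOf_iff]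
    have h := LR_hopD x hx v hv
    rw [h.1, h.2]

lemma ddL_hopA (hx : isDA π (posOf π x)) : ddL (hopA π x) = insert x (ddL π) := by
  ext v
  simp only [ddL, Finset.mem_filter, Finset.mem_univ, true_and, Finset.mem_insert]
  by_cases hv : v = x
  · subst hv
    simp only [true_or, iff_true]
    exact hopA_isDD_x v hx
  · rw [isDD_posOf_iff, isDD_posOf_iff]
    have h := LR_hopA x hx v hv
    rw [h.1, h.2]
    simp [hv]

lemma badL_hopA (hx : isDA π (posOf π x)) : badL (hopA π x) = badL π := by
  ext v
  simp only [badL, Finset.mem_filter, Finset.mem_univ, true_and]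
  by_cases hv : v = x
  · subst hv
    exact iff_of_true (Or.inr (hopA_isDD_x v hx)) (Or.inl hx)
  · rw [isDD_posOf_iff, isDD_posOf_iff, isDA_posOf_iff, isDA_posOf_iff]
    have h := LR_hopA x hx v hv
    rw [h.1, h.2]

lemma hopA_hopD (hx : isDD π (posOf π x)) : hopA (hopD π x) x = π := by
  have hij := isDD_jR x hx
  have hjle := jR_le (π := π) x
  have hi1 := posOf_ge π x
  have hF2 := isDD_F2 x hx
  have hpos : posOf (hopD π x) x = jR π x - 1 := posOf_hopD_x x hx
  have hjl : jL (hopD π x) x = posOf π x - 1 := by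
    apply le_antisymm
    · by_contra hc
      push_neg at hc
      have hmem := jL_mem (π := hopD π x) x
      rw [Finset.mem_filter, Finset.mem_Icc, hpos] at hmem
      have hb : jL (hopD π x) x ≤ jR π x - 2 := by omega
      have := wrd_hopD_mid x hx (q := jL (hopD π x) x) (by omega) hb
      rw [this] at hmem
      have := jR_min (π := π) x (k := jL (hopD π x) x + 1) (by omega) (by omega)
      omega
    · apply Finset.le_max'
      rw [Finset.mem_filter, Finset.mem_Icc, hpos]
      refine ⟨⟨Nat.zero_le _, by omega⟩, ?_⟩
      rw [wrd_hopD_out x hx (Or.inl (by omega))]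
      exact hF2
  rw [hopA, hpos, hjl, show jR π x - 1 - 1 = jR π x - 2 from by omega, hopD,
    mul_inv_cancel_right]

lemma hopD_hopA (hx : isDA π (posOf π x)) : hopD (hopA π x) x = π := by
  have hij := isDA_jL x hx
  have hin := posOf_le π x
  have hF1 := isDA_F1 x hx
  have hpos : posOf (hopA π x) x = jL π x + 1 := posOf_hopA_x x hx
  have hjr : jR (hopA π x) x = posOf π x + 1 := by
    apply le_antisymm
    · apply Finset.min'_le
      rw [Finset.mem_filter, Finset.mem_Icc, hpos]
      refine ⟨⟨by omega, by omega⟩, ?_⟩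
      rw [wrd_hopA_out x hx (Or.inr (by omega))]
      exact hF1
    · by_contra hc
      push_neg at hc
      have hmem := jR_mem (π := hopA π x) x
      rw [Finset.mem_filter, Finset.mem_Icc, hpos] at hmem
      have hb : jR (hopA π x) x ≤ posOf π x := by omega
      have := wrd_hopA_mid x hx (q := jR (hopA π x) x) (by omega) hb
      rw [this] at hmem
      have := jL_max (π := π) x (k := jR (hopA π x) x - 1) (by omega) (by omega)
      omega
  rw [hopD, hpos, hjr, show jL π x + 1 - 1 = jL π x from by omega,
    show posOf π x + 1 - 2 = posOf π x - 1 from by omega, hopA,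
    inv_mul_cancel_right]

lemma posOf_apply {i : ℕ} (h1 : 1 ≤ i) (h2 : i ≤ n) :
    posOf π (π ⟨i - 1, by omega⟩) = i :=
  posOf_unique _ h1 h2 (by unfold wrd; rw [dif_pos ⟨h1, h2⟩])

lemma ddes_eq_card : ddes n π = (ddL π).card := by
  rw [ddes]
  have himg : (Finset.Icc 1 n).filter
      (fun i => wrd n π i < wrd n π (i - 1) ∧ wrd n π (i + 1) < wrd n π i)
      = (ddL π).image (posOf π) := by
    ext i
    simp only [Finset.mem_filter, Finset.mem_Icc, Finset.mem_image, ddL, Finset.mem_univ,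
      true_and]
    constructor
    · rintro ⟨⟨h1, h2⟩, hP⟩
      refine ⟨π ⟨i - 1, by omega⟩, ?_, posOf_apply h1 h2⟩
      rw [posOf_apply h1 h2]
      exact hP
    · rintro ⟨v, hv, rfl⟩
      exact ⟨⟨posOf_ge π v, posOf_le π v⟩, hv⟩
  rw [himg, Finset.card_image_of_injective _ (fun a b h => posOf_inj h)]

lemma ddes_of_bad_empty (h : badL π = ∅) : ddes n π = 0 := by
  rw [ddes_eq_card]
  have hsub : ddL π ⊆ badL π := fun v hv => by
    simp only [ddL, Finset.mem_filter, Finset.mem_univ, true_and] at hv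
    simp only [badL, Finset.mem_filter, Finset.mem_univ, true_and]
    exact Or.inr hv
  rw [h] at hsub
  rw [Finset.subset_empty.mp hsub]
  rfl

lemma adj_ne (hn : 1 ≤ n) {q : ℕ} (hq : q ≤ n) : wrd n π q ≠ wrd n π (q + 1) := by
  by_cases h0 : q = 0
  · subst h0
    rw [wrd_out π (i := 0) (by omega)]
    have := wrd_le π (i := 0 + 1) (by omega) (by omega)
    omega
  · by_cases hq1 : q + 1 ≤ n
    · intro he
      have := wrd_inj π (by omega) hq (by omega) hq1 he
      omega
    · rw [wrd_out π (i := q + 1) (by omega)]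
      have := wrd_le π (i := q) (by omega) hq
      omega

lemma dir_pattern (hn : 1 ≤ n)
    (hbad : ∀ i, 1 ≤ i → i ≤ n → ¬ isDA π i ∧ ¬ isDD π i) :
    ∀ q, q ≤ n → (wrd n π q < wrd n π (q + 1) ↔ q % 2 = 1) := by
  intro q
  induction q with
  | zero =>
    intro _
    rw [wrd_out π (i := 0) (by omega)]
    have := wrd_le π (i := 0 + 1) (by omega) (by omega)
    omega
  | succ k ih =>
    intro hk
    have hdk := ih (by omega)
    have hne1 := adj_ne (π := π) hn (q := k) (by omega)
    have hne2 := adj_ne (π := π) hn (q := k + 1) hk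
    have hb := hbad (k + 1) (by omega) hk
    unfold isDA isDD at hb
    rw [show k + 1 - 1 = k from by omega] at hb
    omega

lemma no_bad_positions (h : badL π = ∅) :
    ∀ i, 1 ≤ i → i ≤ n → ¬ isDA π i ∧ ¬ isDD π i := by
  intro i h1 h2
  have hv : (π ⟨i - 1, by omega⟩) ∉ badL π := by rw [h]; exact Finset.notMem_empty _
  simp only [badL, Finset.mem_filter, Finset.mem_univ, true_and, posOf_apply h1 h2] at hv
  push_neg at hv
  exact hv

lemma no_bad_odd (hn : 1 ≤ n) (h : badL π = ∅) : Odd n := by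
  have hp := dir_pattern hn (no_bad_positions h) n (le_refl n)
  rw [wrd_out π (i := n + 1) (by omega)] at hp
  have := wrd_le π (i := n) hn (le_refl n)
  rw [Nat.odd_iff]
  omega

lemma no_bad_alternating (hn : 1 ≤ n) (h : badL π = ∅) : IsAlternating n π := by
  have hp := dir_pattern hn (no_bad_positions h)
  intro i hi
  rw [Finset.mem_Icc] at hi
  have h1 := hp i (by omega)
  have hne := adj_ne (π := π) hn (q := i) (by omega)
  constructor
  · intro ho
    rw [Nat.odd_iff] at ho
    omega
  · intro he
    rw [Nat.even_iff] at he
    omega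

lemma alternating_no_bad (hn : 1 ≤ n) (hodd : Odd n) (ha : IsAlternating n π) : badL π = ∅ := by
  have hp : ∀ q, q ≤ n → (wrd n π q < wrd n π (q + 1) ↔ q % 2 = 1) := by
    intro q hq
    by_cases h0 : q = 0
    · subst h0
      rw [wrd_out π (i := 0) (by omega)]
      have := wrd_le π (i := 0 + 1) (by omega) (by omega)
      omega
    · by_cases hqn : q = n
      · subst hqn
        rw [wrd_out π (i := q + 1) (by omega)]
        have := wrd_le π (i := q) (by omega) (le_refl _)
        rw [Nat.odd_iff] at hodd
        omega
      · have := ha q (Finset.mem_Icc.mpr ⟨by omega, by omega⟩)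
        have hne := adj_ne (π := π) hn (q := q) hq
        rcases Nat.even_or_odd q with he | ho
        · have := this.2 he
          rw [Nat.even_iff] at he
          omega
        · have := this.1 ho
          rw [Nat.odd_iff] at ho
          omega
  rw [Finset.eq_empty_iff_forall_notMem]
  intro v hv
  simp only [badL, Finset.mem_filter, Finset.mem_univ, true_and] at hv
  have h1 := posOf_ge π v
  have h2 := posOf_le π v
  have hp1 := hp (posOf π v - 1) (by omega)
  rw [show posOf π v - 1 + 1 = posOf π v from by omega] at hp1
  have hp2 := hp (posOf π v) (by omega)
  rcases hv with hda | hdd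
  · have ha1 := hda.1
    have ha2 := hda.2
    omega
  · have ha1 := hdd.1
    have ha2 := hdd.2
    omega

def flip (π : Equiv.Perm (Fin n)) : Equiv.Perm (Fin n) :=
  if h : (badL π).Nonempty then
    if isDD π (posOf π ((badL π).min' h)) then hopD π ((badL π).min' h)
    else hopA π ((badL π).min' h)
  else π

lemma min'_congr {s t : Finset (Fin n)} (hst : s = t) (hs : s.Nonempty) (ht : t.Nonempty) :
    s.min' hs = t.min' ht := by subst hst; rfl

lemma min_bad (hb : (badL π).Nonempty) :
    isDA π (posOf π ((badL π).min' hb)) ∨ isDD π (posOf π ((badL π).min' hb)) := by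
  have := Finset.min'_mem _ hb
  simp only [badL, Finset.mem_filter, Finset.mem_univ, true_and] at this
  exact this

lemma flip_eq_hopD (hb : (badL π).Nonempty)
    (hD : isDD π (posOf π ((badL π).min' hb))) : flip π = hopD π ((badL π).min' hb) := by
  unfold flip; rw [dif_pos hb, if_pos hD]

lemma flip_eq_hopA (hb : (badL π).Nonempty)
    (hD : ¬ isDD π (posOf π ((badL π).min' hb))) : flip π = hopA π ((badL π).min' hb) := by
  unfold flip; rw [dif_pos hb, if_neg hD]

lemma flip_badL (hb : (badL π).Nonempty) : badL (flip π) = badL π := by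
  by_cases hD : isDD π (posOf π ((badL π).min' hb))
  · rw [flip_eq_hopD hb hD]
    exact badL_hopD _ hD
  · have hA := (min_bad hb).resolve_right hD
    rw [flip_eq_hopA hb hD]
    exact badL_hopA _ hA

lemma flip_ddes (hb : (badL π).Nonempty) :
    ddes n (flip π) = ddes n π + 1 ∨ ddes n π = ddes n (flip π) + 1 := by
  by_cases hD : isDD π (posOf π ((badL π).min' hb))
  · right
    rw [flip_eq_hopD hb hD, ddes_eq_card, ddes_eq_card, ddL_hopD _ hD]
    have hmem : (badL π).min' hb ∈ ddL π := by
      simp only [ddL, Finset.mem_filter, Finset.mem_univ, true_and]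
      exact hD
    rw [Finset.card_erase_of_mem hmem]
    have := Finset.card_pos.mpr ⟨_, hmem⟩
    omega
  · left
    have hA := (min_bad hb).resolve_right hD
    rw [flip_eq_hopA hb hD, ddes_eq_card, ddes_eq_card, ddL_hopA _ hA]
    have hmem : (badL π).min' hb ∉ ddL π := by
      simp only [ddL, Finset.mem_filter, Finset.mem_univ, true_and]
      exact hD
    rw [Finset.card_insert_of_notMem hmem]

lemma flip_flip (hb : (badL π).Nonempty) : flip (flip π) = π := by
  by_cases hD : isDD π (posOf π ((badL π).min' hb))
  · rw [flip_eq_hopD hb hD]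
    have hbs : badL (hopD π ((badL π).min' hb)) = badL π := badL_hopD _ hD
    have hb2 : (badL (hopD π ((badL π).min' hb))).Nonempty := by rw [hbs]; exact hb
    have hmin : (badL (hopD π ((badL π).min' hb))).min' hb2 = (badL π).min' hb :=
      min'_congr hbs hb2 hb
    have hDA := hopD_isDA_x ((badL π).min' hb) hD
    have hnd : ¬ isDD (hopD π ((badL π).min' hb))
        (posOf (hopD π ((badL π).min' hb)) ((badL (hopD π ((badL π).min' hb))).min' hb2)) := by
      rw [hmin]; exact isDA_not_isDD hDA
    rw [flip_eq_hopA hb2 hnd, hmin]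
    exact hopA_hopD _ hD
  · have hA := (min_bad hb).resolve_right hD
    rw [flip_eq_hopA hb hD]
    have hbs : badL (hopA π ((badL π).min' hb)) = badL π := badL_hopA _ hA
    have hb2 : (badL (hopA π ((badL π).min' hb))).Nonempty := by rw [hbs]; exact hb
    have hmin : (badL (hopA π ((badL π).min' hb))).min' hb2 = (badL π).min' hb :=
      min'_congr hbs hb2 hb
    have hDDx := hopA_isDD_x ((badL π).min' hb) hA
    have hnd : isDD (hopA π ((badL π).min' hb))
        (posOf (hopA π ((badL π).min' hb)) ((badL (hopA π ((badL π).min' hb))).min' hb2)) := by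
      rw [hmin]; exact hDDx
    rw [flip_eq_hopD hb2 hnd, hmin]
    exact hopD_hopA _ hA
end Hop
end DP

theorem ddes_neg_one (n : ℕ) (hn : 1 ≤ n) :
    (∑ π : Equiv.Perm (Fin n), (-1 : ℤ) ^ ddes n π) =
      if Odd n then (eulerNumber n : ℤ) else 0 := by
  classical
  have hsplit := Finset.sum_filter_add_sum_filter_not Finset.univ
      (fun π : Equiv.Perm (Fin n) => DP.badL π = ∅) (fun π => (-1 : ℤ) ^ ddes n π)
  have hzero : ∑ π ∈ Finset.univ.filter (fun π : Equiv.Perm (Fin n) => ¬ DP.badL π = ∅),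
      (-1 : ℤ) ^ ddes n π = 0 := by
    refine Finset.sum_involution (fun π _ => DP.flip π) ?_ ?_ ?_ ?_
    · intro π hπ
      rw [Finset.mem_filter] at hπ
      have hb : (DP.badL π).Nonempty := Finset.nonempty_iff_ne_empty.mpr hπ.2
      rcases DP.flip_ddes hb with h | h
      · rw [h, pow_succ]; ring
      · rw [h, pow_succ]; ring
    · intro π hπ _
      rw [Finset.mem_filter] at hπ
      have hb : (DP.badL π).Nonempty := Finset.nonempty_iff_ne_empty.mpr hπ.2
      intro he
      have he2 : DP.flip π = π := he
      rcases DP.flip_ddes hb with h | h <;> rw [he2] at h <;> omega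
    · intro π hπ
      rw [Finset.mem_filter] at hπ ⊢
      have hb : (DP.badL π).Nonempty := Finset.nonempty_iff_ne_empty.mpr hπ.2
      refine ⟨Finset.mem_univ _, ?_⟩
      rw [DP.flip_badL hb]
      exact hπ.2
    · intro π hπ
      rw [Finset.mem_filter] at hπ
      exact DP.flip_flip (Finset.nonempty_iff_ne_empty.mpr hπ.2)
  have hfix : ∑ π ∈ Finset.univ.filter (fun π : Equiv.Perm (Fin n) => DP.badL π = ∅),
      (-1 : ℤ) ^ ddes n π
      = ((Finset.univ.filter (fun π : Equiv.Perm (Fin n) => DP.badL π = ∅)).card : ℤ) := by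
    rw [Finset.card_eq_sum_ones, Nat.cast_sum]
    apply Finset.sum_congr rfl
    intro π hπ
    rw [Finset.mem_filter] at hπ
    rw [DP.ddes_of_bad_empty hπ.2, pow_zero]
    norm_num
  rw [← hsplit, hzero, add_zero, hfix]
  by_cases ho : Odd n
  · rw [if_pos ho]
    have hset : Finset.univ.filter (fun π : Equiv.Perm (Fin n) => DP.badL π = ∅)
        = Finset.univ.filter (IsAlternating n) := by
      ext π
      simp only [Finset.mem_filter, Finset.mem_univ, true_and]
      exact ⟨fun h => DP.no_bad_alternating hn h, fun h => DP.alternating_no_bad hn ho h⟩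
    rw [hset, eulerNumber]
  · rw [if_neg ho]
    have hset : Finset.univ.filter (fun π : Equiv.Perm (Fin n) => DP.badL π = ∅) = ∅ := by
      rw [Finset.eq_empty_iff_forall_notMem]
      intro π hπ
      rw [Finset.mem_filter] at hπ
      exact ho (DP.no_bad_odd hn hπ.2)
    rw [hset]
    simp
end

section
/- For all n ≥ 2, the number of derangements of [n] with exactly one cyclic peak equals 2^{n-2}. -/
/-- Number of cyclic peaks: letters i with i < pi(i) > pi(pi(i)). -/
def cpk (n : ℕ) (π : Equiv.Perm (Fin n)) : ℕ :=
  (Finset.univ.filter (fun i : Fin n => i < π i ∧ π (π i) < π i)).card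

/-- Number of cyclic valleys: letters i with i > pi(i) < pi(pi(i)). -/
def cval (n : ℕ) (π : Equiv.Perm (Fin n)) : ℕ :=
  (Finset.univ.filter (fun i : Fin n => π i < i ∧ π i < π (π i))).card

/-- Number of cyclic double ascents: letters i with i < pi(i) < pi(pi(i)). -/
def cdasc (n : ℕ) (π : Equiv.Perm (Fin n)) : ℕ :=
  (Finset.univ.filter (fun i : Fin n => i < π i ∧ π i < π (π i))).card

/-- Number of cyclic double descents: letters i with i > pi(i) > pi(pi(i)). -/
def cddes (n : ℕ) (π : Equiv.Perm (Fin n)) : ℕ :=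
  (Finset.univ.filter (fun i : Fin n => π i < i ∧ π (π i) < π i)).card


/-!
A derangement with a single cyclic peak is a unimodal cycle: it climbs through its set `E` of
excedances in increasing order up to the maximum, then descends through the complement of `E`
in decreasing order back to the minimum. Indeed, if `e` is the only cyclic peak, then `π e` is
the maximum and, by pigeonhole, every other excedance is sent to the next excedance above it.
A derangement has as many cyclic valleys as cyclic peaks, so the order-dual argument shows that
every non-excedance is sent to the next non-excedance below it. Hence `π ↦ E` is a bijection
onto the sets containing the minimum but not the maximum, of which there are `2 ^ (n - 2)`.
-/

open Finset Function

namespace Finset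

theorem card_filter_mem_and_notMem {α : Type*} [Fintype α] [DecidableEq α] {a b : α}
    (hab : a ≠ b) : #{s : Finset α | a ∈ s ∧ b ∉ s} = 2 ^ (Fintype.card α - 2) := by
  have hcard : #(univ \ {a, b}) = Fintype.card α - 2 := by
    rw [card_univ_sdiff, card_pair hab]
  rw [← hcard, ← card_powerset]
  refine card_bij' (fun s _ => s.erase a) (fun t _ => insert a t) ?_ ?_ ?_ ?_ <;>
    simp only [mem_filter, mem_univ, true_and, mem_powerset, subset_iff, mem_sdiff, mem_insert,
      mem_singleton, mem_erase, not_or, true_or]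
  · rintro s ⟨-, hb⟩ x ⟨hxa, hx⟩
    exact ⟨hxa, fun hxb => hb (hxb ▸ hx)⟩
  · intro t ht
    exact ⟨Ne.symm hab, fun hb => (ht hb).2 rfl⟩
  · rintro s ⟨ha, -⟩
    exact insert_erase ha
  · intro t ht
    exact erase_insert fun ha => (ht ha).1 rfl

section SuccIn

variable {α : Type*} [LinearOrder α] {s : Finset α} {i k x : α}

section OrderTop

variable [OrderTop α]

def succIn (s : Finset α) (i : α) : α := (s.filter (i < ·)).inf id

theorem lt_succIn (hi : i < ⊤) : i < succIn s i :=
  (Finset.lt_inf_iff hi).mpr fun _ hk => (mem_filter.mp hk).2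

theorem succIn_le (hk : k ∈ s) (hik : i < k) : succIn s i ≤ k :=
  inf_le (f := id) (mem_filter.mpr ⟨hk, hik⟩)

theorem succIn_mem_insert : succIn s i ∈ insert ⊤ s := by
  rcases (s.filter (i < ·)).eq_empty_or_nonempty with h | h
  · simp [succIn, h]
  · obtain ⟨k, hk, hk'⟩ := exists_mem_eq_inf _ h id
    rw [succIn, hk']
    exact mem_insert_of_mem (mem_filter.mp hk).1

theorem eq_succIn_of (hx : x ∈ insert ⊤ s) (hix : i < x) (hle : ∀ k ∈ s, i < k → x ≤ k) :
    x = succIn s i := by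
  refine le_antisymm (Finset.le_inf fun k hk => hle k (mem_filter.mp hk).1 (mem_filter.mp hk).2)
    ?_
  rcases mem_insert.mp hx with rfl | hx
  exacts [le_top, succIn_le hx hix]

end OrderTop

section OrderBot

variable [OrderBot α]

def predIn (s : Finset α) (i : α) : α := (s.filter (· < i)).sup id

theorem predIn_lt (hi : ⊥ < i) : predIn s i < i := lt_succIn (α := αᵒᵈ) hi

theorem le_predIn (hk : k ∈ s) (hki : k < i) : k ≤ predIn s i :=
  succIn_le (α := αᵒᵈ) hk hki

theorem predIn_mem_insert : predIn s i ∈ insert ⊥ s := succIn_mem_insert (α := αᵒᵈ)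

end OrderBot

end SuccIn

end Finset

namespace Equiv.Perm

variable {α : Type*} [Fintype α] [LinearOrder α] {π : Perm α} {i j e : α}

def excedances (π : Perm α) : Finset α := {i | i < π i}

def cyclicPeaks (π : Perm α) : Finset α := {i | i < π i ∧ π (π i) < π i}

def cyclicValleys (π : Perm α) : Finset α := {i | π i < i ∧ π i < π (π i)}

@[simp] theorem mem_excedances : i ∈ π.excedances ↔ i < π i := by simp [excedances]

@[simp] theorem mem_cyclicPeaks : i ∈ π.cyclicPeaks ↔ i < π i ∧ π (π i) < π i := by
  simp [cyclicPeaks]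

theorem card_cyclicPeaks_eq_card_cyclicValleys (hd : ∀ i, π i ≠ i) :
    #π.cyclicPeaks = #π.cyclicValleys := by
  have hpoint : ∀ i,
      ((if i < π i ∧ π (π i) < π i then 1 else 0) + if π i < π (π i) then 1 else 0)
        = (if π i < i ∧ π i < π (π i) then 1 else 0) + if i < π i then 1 else 0 := by
    intro i
    rcases (hd i).lt_or_gt with h | h <;> rcases (hd (π i)).lt_or_gt with h' | h' <;>
      simp [h, h', h.not_gt, h'.not_gt]
  have hreindex : ∑ i, (if π i < π (π i) then 1 else 0) = ∑ i, if i < π i then 1 else 0 :=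
    Equiv.sum_comp π fun j => if j < π j then 1 else 0
  have hsum := sum_congr rfl fun i (_ : i ∈ univ) => hpoint i
  rw [sum_add_distrib, sum_add_distrib, hreindex] at hsum
  simpa only [cyclicPeaks, cyclicValleys, card_filter] using Nat.add_right_cancel hsum

theorem apply_mem_excedances (hd : ∀ i, π i ≠ i) (hi : i ∈ π.excedances)
    (hp : i ∉ π.cyclicPeaks) : π i ∈ π.excedances := by
  rw [mem_excedances] at hi ⊢
  rw [mem_cyclicPeaks, not_and, not_lt] at hp
  exact (hp hi).lt_of_ne' (hd (π i))

theorem max'_excedances_mem_cyclicPeaks (hd : ∀ i, π i ≠ i) (hE : π.excedances.Nonempty) :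
    π.excedances.max' hE ∈ π.cyclicPeaks := by
  by_contra hp
  have hM := max'_mem _ hE
  exact (le_max' _ _ (apply_mem_excedances hd hM hp)).not_gt (mem_excedances.mp hM)

theorem symm_top_mem_cyclicPeaks [OrderTop α] (hd : ∀ i, π i ≠ i) :
    π.symm ⊤ ∈ π.cyclicPeaks := by
  have h := hd (π.symm ⊤)
  rw [apply_symm_apply] at h
  rw [mem_cyclicPeaks, apply_symm_apply]
  exact ⟨h.symm.lt_top, (hd ⊤).lt_top⟩

theorem le_of_cyclicPeaks_eq_singleton (hd : ∀ i, π i ≠ i) (he : π.cyclicPeaks = {e})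
    (hj : j ∈ π.excedances) : j ≤ e := by
  have hmax := max'_excedances_mem_cyclicPeaks hd ⟨j, hj⟩
  rw [he, mem_singleton] at hmax
  exact hmax ▸ le_max' _ j hj

theorem apply_eq_top_of_cyclicPeaks_eq_singleton [OrderTop α] (hd : ∀ i, π i ≠ i)
    (he : π.cyclicPeaks = {e}) : π e = ⊤ := by
  have htop := symm_top_mem_cyclicPeaks hd (π := π)
  rw [he, mem_singleton] at htop
  rw [← htop, apply_symm_apply]

theorem apply_le_of_cyclicPeaks_eq_singleton (hd : ∀ i, π i ≠ i) (he : π.cyclicPeaks = {e})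
    (hi : i ∈ π.excedances) (hj : j ∈ π.excedances) (hij : i < j) : π i ≤ j := by
  by_contra! hji
  -- Pigeonhole: `π` would send the excedances `≥ j` other than `e`, together with `i`,
  -- injectively into the excedances `> j`, a set with one element fewer.
  set S := π.excedances.filter (j ≤ ·)
  have hmaps : ∀ x ∈ π.excedances, x ≠ e → j < π x → π x ∈ S.erase j := fun x hx hxe hjx =>
    mem_erase.mpr ⟨hjx.ne', mem_filter.mpr
      ⟨apply_mem_excedances hd hx (by rwa [he, mem_singleton]), hjx.le⟩⟩
  have hie : i ≠ e := (hij.trans_le (le_of_cyclicPeaks_eq_singleton hd he hj)).ne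
  have hcard := card_le_card_of_injOn π (s := insert i (S.erase e)) (t := S.erase j) (by
    intro x hx
    rcases mem_insert.mp hx with rfl | hx
    · exact hmaps x hi hie hji
    · obtain ⟨hxe, hx⟩ := mem_erase.mp hx
      obtain ⟨hx, hjx⟩ := mem_filter.mp hx
      exact hmaps x hx hxe (hjx.trans_lt (mem_excedances.mp hx))) π.injective.injOn
  have heS : e ∈ S := mem_filter.mpr
    ⟨mem_excedances.mpr (mem_cyclicPeaks.mp (he ▸ mem_singleton_self e)).1,
      le_of_cyclicPeaks_eq_singleton hd he hj⟩
  have hjS : j ∈ S := mem_filter.mpr ⟨hj, le_rfl⟩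
  have hiS : i ∉ S.erase e := fun h => (mem_filter.mp (mem_of_mem_erase h)).2.not_gt hij
  rw [card_insert_of_notMem hiS, card_erase_of_mem heS, card_erase_of_mem hjS] at hcard
  have := card_pos.mpr ⟨e, heS⟩
  omega

theorem apply_eq_succIn [OrderTop α] (hd : ∀ i, π i ≠ i) (h1 : #π.cyclicPeaks = 1)
    (hi : i < π i) : π i = succIn π.excedances i := by
  obtain ⟨e, he⟩ := card_eq_one.mp h1
  have hiE := mem_excedances.mpr hi
  refine eq_succIn_of ?_ hi fun k hk hik =>
    apply_le_of_cyclicPeaks_eq_singleton hd he hiE hk hik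
  by_cases hie : i = e
  · rw [hie, apply_eq_top_of_cyclicPeaks_eq_singleton hd he]
    exact mem_insert_self _ _
  · exact mem_insert_of_mem (apply_mem_excedances hd hiE (by rwa [he, mem_singleton]))

theorem apply_eq_predIn [OrderBot α] (hd : ∀ i, π i ≠ i) (h1 : #π.cyclicValleys = 1)
    (hi : π i < i) : π i = predIn {k | π k < k} i :=
  apply_eq_succIn (α := αᵒᵈ) hd h1 hi

theorem compl_excedances (hd : ∀ i, π i ≠ i) : π.excedancesᶜ = ({k | π k < k} : Finset α) := by
  ext k
  simp [(hd k).le_iff_lt]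

section UnimodalCycle

variable [BoundedOrder α] {E : Finset α}

def unimodalCycle (E : Finset α) (i : α) : α := if i ∈ E then succIn E i else predIn Eᶜ i

theorem coe_eq_unimodalCycle (hd : ∀ i, π i ≠ i) (h1 : #π.cyclicPeaks = 1) :
    ⇑π = unimodalCycle π.excedances := by
  funext i
  rw [unimodalCycle]
  split_ifs with hi
  · exact apply_eq_succIn hd h1 (mem_excedances.mp hi)
  · rw [compl_excedances hd]
    exact apply_eq_predIn hd (card_cyclicPeaks_eq_card_cyclicValleys hd ▸ h1)
      ((not_lt.mp (mem_excedances.not.mp hi)).lt_of_ne (hd i))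

theorem lt_unimodalCycle (htop : ⊤ ∉ E) (hi : i ∈ E) : i < unimodalCycle E i := by
  rw [unimodalCycle, if_pos hi]
  exact lt_succIn (ne_of_mem_of_not_mem hi htop).lt_top

theorem unimodalCycle_lt (hbot : ⊥ ∈ E) (hi : i ∉ E) : unimodalCycle E i < i := by
  rw [unimodalCycle, if_neg hi]
  exact predIn_lt (ne_of_mem_of_not_mem hbot hi).symm.bot_lt

theorem unimodalCycle_injective (hbot : ⊥ ∈ E) (htop : ⊤ ∉ E) :
    Injective (unimodalCycle E) := by
  refine Injective.of_lt_imp_ne fun a b hab heq => ?_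
  by_cases ha : a ∈ E <;> by_cases hb : b ∈ E
  · have hle : unimodalCycle E a ≤ b := by
      rw [unimodalCycle, if_pos ha]
      exact succIn_le hb hab
    exact (heq ▸ hle).not_gt (lt_unimodalCycle htop hb)
  · -- the common value would lie strictly between `⊥` and `⊤`, both in `E` and in `Eᶜ`
    have hup : unimodalCycle E a ∈ insert ⊤ E := by
      rw [unimodalCycle, if_pos ha]
      exact succIn_mem_insert
    have hdown : unimodalCycle E b ∈ insert ⊥ Eᶜ := by
      rw [unimodalCycle, if_neg hb]
      exact predIn_mem_insert
    have hlt_top := (unimodalCycle_lt hbot hb).trans_le le_top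
    have hbot_lt := (lt_unimodalCycle htop ha).trans_le' bot_le
    rw [← heq] at hlt_top hdown
    exact mem_compl.mp ((mem_insert.mp hdown).resolve_left hbot_lt.ne')
      ((mem_insert.mp hup).resolve_left hlt_top.ne)
  · exact ((unimodalCycle_lt hbot ha).trans (hab.trans (lt_unimodalCycle htop hb))).ne heq
  · have hle : a ≤ unimodalCycle E b := by
      rw [unimodalCycle, if_neg hb]
      exact le_predIn (mem_compl.mpr ha) hab
    exact (unimodalCycle_lt hbot ha).not_ge (heq ▸ hle)

noncomputable def unimodalCyclePerm (hbot : ⊥ ∈ E) (htop : ⊤ ∉ E) : Perm α :=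
  Equiv.ofBijective _ (Finite.injective_iff_bijective.mp (unimodalCycle_injective hbot htop))

variable (hbot : ⊥ ∈ E) (htop : ⊤ ∉ E)

@[simp] theorem unimodalCyclePerm_apply : unimodalCyclePerm hbot htop i = unimodalCycle E i := rfl

theorem excedances_unimodalCyclePerm : (unimodalCyclePerm hbot htop).excedances = E := by
  ext i
  rw [mem_excedances, unimodalCyclePerm_apply]
  exact ⟨fun h => by_contra fun hi => (unimodalCycle_lt hbot hi).not_gt h, lt_unimodalCycle htop⟩

theorem unimodalCyclePerm_apply_ne : unimodalCyclePerm hbot htop i ≠ i := by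
  rw [unimodalCyclePerm_apply]
  by_cases hi : i ∈ E
  exacts [(lt_unimodalCycle htop hi).ne', (unimodalCycle_lt hbot hi).ne]

theorem card_cyclicPeaks_unimodalCyclePerm :
    #(unimodalCyclePerm hbot htop).cyclicPeaks = 1 := by
  set σ := unimodalCyclePerm hbot htop
  refine card_eq_one.mpr ⟨σ.symm ⊤, eq_singleton_iff_unique_mem.mpr
    ⟨symm_top_mem_cyclicPeaks fun _ => unimodalCyclePerm_apply_ne hbot htop, fun i hi => ?_⟩⟩
  -- a peak is an excedance sent outside `E`, and the ascending branch only leaves `E` at `⊤`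
  rw [mem_cyclicPeaks] at hi
  have hiE : i ∈ E := excedances_unimodalCyclePerm hbot htop ▸ mem_excedances.mpr hi.1
  have hσiE : σ i ∉ E := fun h =>
    (mem_excedances.mp (excedances_unimodalCyclePerm hbot htop ▸ h)).not_gt hi.2
  have hσi : σ i ∈ insert ⊤ E := by
    rw [unimodalCyclePerm_apply, unimodalCycle, if_pos hiE]
    exact succIn_mem_insert
  exact σ.eq_symm_apply.mpr ((mem_insert.mp hσi).resolve_right hσiE)

end UnimodalCycle

theorem card_derangements_with_one_cyclicPeak [BoundedOrder α] [Nontrivial α] :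
    #{π : Perm α | (∀ i, π i ≠ i) ∧ #π.cyclicPeaks = 1} = 2 ^ (Fintype.card α - 2) := by
  rw [← card_filter_mem_and_notMem (bot_ne_top : (⊥ : α) ≠ ⊤)]
  refine card_bij (fun π _ => π.excedances) ?_ ?_ ?_ <;>
    simp only [mem_filter, mem_univ, true_and]
  · rintro π ⟨hd, -⟩
    exact ⟨mem_excedances.mpr (hd ⊥).bot_lt, fun h => not_top_lt (mem_excedances.mp h)⟩
  · rintro π ⟨hdπ, h1π⟩ σ ⟨hdσ, h1σ⟩ h
    exact DFunLike.coe_injective (by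
      rw [coe_eq_unimodalCycle hdπ h1π, coe_eq_unimodalCycle hdσ h1σ, h])
  · rintro E ⟨hbot, htop⟩
    exact ⟨unimodalCyclePerm hbot htop, ⟨fun _ => unimodalCyclePerm_apply_ne hbot htop,
      card_cyclicPeaks_unimodalCyclePerm hbot htop⟩, excedances_unimodalCyclePerm hbot htop⟩

end Equiv.Perm

/-- For n ≥ 2, the number of derangements of [n] with exactly one cyclic peak
is 2^(n-2). -/
theorem derangements_one_cpk (n : ℕ) (hn : 2 ≤ n) :
    (Finset.univ.filter
      (fun π : Equiv.Perm (Fin n) => (∀ i, π i ≠ i) ∧ cpk n π = 1)).card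
      = 2 ^ (n - 2) := by
  obtain ⟨m, rfl⟩ : ∃ m, n = m + 2 := ⟨n - 2, by omega⟩
  have h := Equiv.Perm.card_derangements_with_one_cyclicPeak (α := Fin (m + 2))
  rw [Fintype.card_fin] at h
  -- the two sides agree up to unfolding `cpk` and up to instances, which `convert` reconciles
  convert h using 5
  rfl
end
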